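/- arXiv:1101.1256 — 11 statements merged into one kernel-verified Lean document; each statement's English description precedes it below -/
import Mathlib

section
/- For any two machines with loads ℓ_a, ℓ_b and speeds s_a, s_b, and a job of length p_i assigned to machine a, if (ℓ_a + p_i)/s_a > (ℓ_b + 2p_i)/s_b, then the function Φ(σ) = Σ_j ℓ_j²/s_j + 3Σ_i p_i²/s_{σ(i)} strictly decreases when job i moves from machine a to machine b. -/
/-- RANDOM policy on uniform machines. If a job `i` makes a better
response move from its machine `σ i` to machine `b` (i.e.
`(ℓ_a + p_i)/s_a > (ℓ_b + 2 p_i)/s_b`), then the potential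
`Φ(σ) = Σ_j ℓ_j²/s_j + 3 Σ_i p_i²/s_{σ(i)}` strictly decreases. -/
theorem random_uniform_potential_decreases
    {n m : ℕ} (p : Fin n → ℝ) (s : Fin m → ℝ)
    (hp : ∀ i, 0 < p i) (hs : ∀ j, 0 < s j)
    (σ : Fin n → Fin m) (i : Fin n) (b : Fin m) (hb : b ≠ σ i)
    (load : (Fin n → Fin m) → Fin m → ℝ)
    (hload : ∀ τ j, load τ j = ∑ i' ∈ Finset.univ.filter (fun i' => τ i' = j), p i')
    (Φ : (Fin n → Fin m) → ℝ)
    (hΦ : ∀ τ, Φ τ = (∑ j, (load τ j) ^ 2 / s j) + 3 * ∑ i', (p i') ^ 2 / s (τ i'))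
    (hmove : (load σ b + 2 * p i) / s b < (load σ (σ i) + p i) / s (σ i)) :
    Φ (Function.update σ i b) < Φ σ := by
  set a := σ i with ha
  set τ := Function.update σ i b with hτ
  have hpi := hp i
  have hsa := hs a
  have hsb := hs b
  -- generic sum manipulation over jobs
  have sum_eq : ∀ (g : Fin n → Fin m → ℝ),
      ∑ i', g i' (τ i') = ∑ i', g i' (σ i') - g i a + g i b := by
    intro g
    have h1 : ∑ i', g i' (τ i') = g i (τ i) + ∑ i' ∈ Finset.univ.erase i, g i' (τ i') :=
      (Finset.add_sum_erase _ _ (Finset.mem_univ i)).symm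
    have h2 : ∑ i', g i' (σ i') = g i (σ i) + ∑ i' ∈ Finset.univ.erase i, g i' (σ i') :=
      (Finset.add_sum_erase _ _ (Finset.mem_univ i)).symm
    have h3 : ∑ i' ∈ Finset.univ.erase i, g i' (τ i')
        = ∑ i' ∈ Finset.univ.erase i, g i' (σ i') := by
      refine Finset.sum_congr rfl fun x hx => ?_
      rw [hτ, Function.update_of_ne (Finset.ne_of_mem_erase hx)]
    have h4 : τ i = b := by rw [hτ, Function.update_self]
    rw [h1, h2, h3, h4, ← ha]
    ring
  -- load change
  have hLoad : ∀ j, load τ j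
      = load σ j - (if a = j then p i else 0) + (if b = j then p i else 0) := by
    intro j
    rw [hload, hload, Finset.sum_filter, Finset.sum_filter]
    exact sum_eq (fun i' x => if x = j then p i' else 0)
  have hLa : load τ a = load σ a - p i := by
    rw [hLoad, if_pos rfl, if_neg hb]; ring
  have hLb : load τ b = load σ b + p i := by
    rw [hLoad, if_pos rfl, if_neg (Ne.symm hb)]; ring
  have hLo : ∀ j, j ≠ a → j ≠ b → load τ j = load σ j := by
    intro j hja hjb
    rw [hLoad, if_neg (fun h => hja h.symm), if_neg (fun h => hjb h.symm)]; ring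
  -- split machine sums at the two points a, b
  have hmemb : b ∈ Finset.univ.erase a := Finset.mem_erase.2 ⟨hb, Finset.mem_univ b⟩
  have esum : ∀ (F : Fin m → ℝ),
      ∑ j, F j = F a + (F b + ∑ j ∈ (Finset.univ.erase a).erase b, F j) := by
    intro F
    rw [← Finset.add_sum_erase _ _ (Finset.mem_univ a), ← Finset.add_sum_erase _ _ hmemb]
  have hS1 : ∑ j, (load τ j) ^ 2 / s j
      = (∑ j, (load σ j) ^ 2 / s j)
        + ((load σ a - p i) ^ 2 / s a - (load σ a) ^ 2 / s a)
        + ((load σ b + p i) ^ 2 / s b - (load σ b) ^ 2 / s b) := by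
    rw [esum (fun j => (load τ j) ^ 2 / s j), esum (fun j => (load σ j) ^ 2 / s j)]
    have hrest : ∑ j ∈ (Finset.univ.erase a).erase b, (load τ j) ^ 2 / s j
        = ∑ j ∈ (Finset.univ.erase a).erase b, (load σ j) ^ 2 / s j := by
      refine Finset.sum_congr rfl fun x hx => ?_
      rw [hLo x (Finset.ne_of_mem_erase (Finset.mem_of_mem_erase hx))
        (Finset.ne_of_mem_erase hx)]
    simp only [hrest, hLa, hLb]
    ring
  have hS2 : ∑ i', (p i') ^ 2 / s (τ i')
      = (∑ i', (p i') ^ 2 / s (σ i')) - (p i) ^ 2 / s a + (p i) ^ 2 / s b :=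
    sum_eq (fun i' x => (p i') ^ 2 / s x)
  -- the numeric inequality
  have h2 : 2 * p i * ((load σ b + 2 * p i) / s b)
      < 2 * p i * ((load σ a + p i) / s a) := by
    exact mul_lt_mul_of_pos_left hmove (by linarith)
  have e1 : (load σ a - p i) ^ 2 / s a - (load σ a) ^ 2 / s a - 3 * ((p i) ^ 2 / s a)
      = -(2 * p i * ((load σ a + p i) / s a)) := by
    field_simp
    ring
  have e2 : (load σ b + p i) ^ 2 / s b - (load σ b) ^ 2 / s b + 3 * ((p i) ^ 2 / s b)
      = 2 * p i * ((load σ b + 2 * p i) / s b) := by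
    field_simp
    ring
  rw [hΦ, hΦ, hS1, hS2]
  nlinarith [h2, e1, e2]
end

section
/- The scheduling game on uniform machines under the RANDOM policy is a potential game: the better-response dynamic always converges to a pure Nash equilibrium. -/
/-- Load of machine `j` under profile `σ` (uniform machines: jobs have lengths `p`). -/
def uniLoad {n m : ℕ} (p : Fin n → ℝ) (σ : Fin n → Fin m) (j : Fin m) : ℝ :=
  ∑ i ∈ Finset.univ.filter (fun i => σ i = j), p i

/-- RANDOM cost of job `i` on uniform machines: `(ℓ_{σ i} + p_i) / (2 s_{σ i})`. -/
noncomputable def randomCost {n m : ℕ} (p : Fin n → ℝ) (s : Fin m → ℝ)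
    (σ : Fin n → Fin m) (i : Fin n) : ℝ :=
  (uniLoad p σ (σ i) + p i) / (2 * s (σ i))

/-- A better response move: some job strictly decreases its RANDOM cost. -/
def randomStep {n m : ℕ} (p : Fin n → ℝ) (s : Fin m → ℝ)
    (σ σ' : Fin n → Fin m) : Prop :=
  ∃ (i : Fin n) (b : Fin m), σ' = Function.update σ i b ∧
    randomCost p s σ' i < randomCost p s σ i

/-- Pure Nash equilibrium under RANDOM on uniform machines. -/
def randomNE {n m : ℕ} (p : Fin n → ℝ) (s : Fin m → ℝ) (σ : Fin n → Fin m) : Prop :=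
  ∀ (i : Fin n) (b : Fin m), randomCost p s σ i ≤ randomCost p s (Function.update σ i b) i

noncomputable def Phi {n m : ℕ} (p : Fin n → ℝ) (s : Fin m → ℝ)
    (σ : Fin n → Fin m) : ℝ :=
  (∑ j, (uniLoad p σ j)^2 / s j) + 3 * ∑ i, (p i)^2 / s (σ i)

lemma uniLoad_update {n m : ℕ} (p : Fin n → ℝ) (σ : Fin n → Fin m)
    (i : Fin n) (b : Fin m) (j : Fin m) :
    uniLoad p (Function.update σ i b) j
      = uniLoad p σ j + (if b = j then p i else 0) - (if σ i = j then p i else 0) := by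
  classical
  unfold uniLoad
  rw [Finset.sum_filter, Finset.sum_filter]
  rw [← Finset.sum_erase_add _ _ (Finset.mem_univ i),
      ← Finset.sum_erase_add _ _ (Finset.mem_univ i)]
  have h : ∀ k ∈ Finset.univ.erase i,
      (if Function.update σ i b k = j then p k else 0) = (if σ k = j then p k else 0) := by
    intro k hk
    rw [Function.update_of_ne (Finset.ne_of_mem_erase hk)]
  rw [Finset.sum_congr rfl h, Function.update_self]
  ring

lemma phi_decrease {n m : ℕ} (p : Fin n → ℝ) (s : Fin m → ℝ)
    (hp : ∀ i, 0 < p i) (hs : ∀ j, 0 < s j)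
    {σ σ' : Fin n → Fin m}
    (i : Fin n) (b : Fin m) (hσ' : σ' = Function.update σ i b)
    (hlt : randomCost p s σ' i < randomCost p s σ i) :
    Phi p s σ' < Phi p s σ := by
  classical
  have hb : b ≠ σ i := by
    rintro rfl
    rw [Function.update_eq_self] at hσ'
    subst hσ'
    exact lt_irrefl _ hlt
  set a := σ i with ha
  set la := uniLoad p σ a with hla
  set lb := uniLoad p σ b with hlb
  have hL : ∀ j, uniLoad p σ' j
      = uniLoad p σ j + (if b = j then p i else 0) - (if a = j then p i else 0) := by
    intro j; rw [hσ', uniLoad_update, ha]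
  have hLa : uniLoad p σ' a = la - p i := by
    rw [hL a, if_neg hb, if_pos rfl]; ring
  have hLb : uniLoad p σ' b = lb + p i := by
    rw [hL b, if_pos rfl, if_neg (Ne.symm hb)]; ring
  have hLj : ∀ j, j ≠ a → j ≠ b → uniLoad p σ' j = uniLoad p σ j := by
    intro j hja hjb
    rw [hL j, if_neg (Ne.symm hjb), if_neg (Ne.symm hja)]; ring
  have hσ'i : σ' i = b := by rw [hσ', Function.update_self]
  -- first sum
  have hS1 : (∑ j, (uniLoad p σ' j)^2 / s j) - (∑ j, (uniLoad p σ j)^2 / s j)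
      = ((la - p i)^2 - la^2)/ s a + ((lb + p i)^2 - lb^2)/ s b := by
    rw [← Finset.sum_sub_distrib]
    have hsub : ({a, b} : Finset (Fin m)) ⊆ Finset.univ := Finset.subset_univ _
    rw [← Finset.sum_subset hsub (by
      intro j _ hj
      simp only [Finset.mem_insert, Finset.mem_singleton, not_or] at hj
      rw [hLj j hj.1 hj.2]; ring)]
    rw [Finset.sum_pair (Ne.symm hb)]
    rw [hLa, hLb]
    ring
  -- second sum
  have hS2 : (∑ k, (p k)^2 / s (σ' k)) - (∑ k, (p k)^2 / s (σ k))
      = (p i)^2 / s b - (p i)^2 / s a := by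
    rw [← Finset.sum_sub_distrib]
    rw [Finset.sum_eq_single i (fun k _ hk => by
      rw [hσ', Function.update_of_ne hk]; ring) (by simp)]
    rw [hσ'i, ha]
  have hca : randomCost p s σ i = (la + p i) / (2 * s a) := rfl
  have hcb : randomCost p s σ' i = (lb + 2 * p i) / (2 * s b) := by
    rw [randomCost, hσ'i, hLb]; ring_nf
  have key : Phi p s σ' - Phi p s σ
      = ((la - p i)^2 - la^2)/ s a + ((lb + p i)^2 - lb^2)/ s b
        + 3 * ((p i)^2 / s b - (p i)^2 / s a) := by
    unfold Phi; linarith [hS1, hS2]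
  have hdiff : Phi p s σ' - Phi p s σ
      = 4 * p i * (randomCost p s σ' i - randomCost p s σ i) := by
    rw [key, hca, hcb]
    have hsa := (hs a).ne'
    have hsb := (hs b).ne'
    field_simp
    ring
  have hpi := hp i
  nlinarith [mul_pos (by positivity : (0:ℝ) < 4 * p i) (sub_pos.mpr hlt)]

lemma step_decrease {n m : ℕ} (p : Fin n → ℝ) (s : Fin m → ℝ)
    (hp : ∀ i, 0 < p i) (hs : ∀ j, 0 < s j) {σ σ' : Fin n → Fin m}
    (h : randomStep p s σ σ') : Phi p s σ' < Phi p s σ := by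
  obtain ⟨i, b, hσ', hlt⟩ := h
  exact phi_decrease p s hp hs i b hσ' hlt

/-- The scheduling game on uniform machines under the RANDOM policy is a
potential game: there is no infinite sequence of better response moves, and from every
profile the better-response dynamic reaches a pure Nash equilibrium. -/
theorem random_uniform_potential_game
    {n m : ℕ} (hm : 0 < m) (p : Fin n → ℝ) (s : Fin m → ℝ)
    (hp : ∀ i, 0 < p i) (hs : ∀ j, 0 < s j) :
    (¬ ∃ f : ℕ → (Fin n → Fin m), ∀ t, randomStep p s (f t) (f (t + 1))) ∧
    (∀ σ₀ : Fin n → Fin m, ∃ σ : Fin n → Fin m,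
      Relation.ReflTransGen (randomStep p s) σ₀ σ ∧ randomNE p s σ) := by
  constructor
  · rintro ⟨f, hf⟩
    have hanti : StrictAnti (fun t => Phi p s (f t)) :=
      strictAnti_nat_of_succ_lt (fun t => step_decrease p s hp hs (hf t))
    have hinj : Function.Injective f := fun t₁ t₂ h => hanti.injective (by simp [h])
    obtain ⟨t₁, t₂, hne, heq⟩ := Finite.exists_ne_map_eq_of_infinite f
    exact hne (hinj heq)
  · intro σ₀
    have hfin : (setOf (Relation.ReflTransGen (randomStep p s) σ₀)).Finite :=
      Set.toFinite _
    obtain ⟨σ, hσmem, hmin⟩ := Set.exists_min_image _ (Phi p s) hfin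
      ⟨σ₀, Relation.ReflTransGen.refl⟩
    refine ⟨σ, hσmem, ?_⟩
    intro i b
    by_contra hlt
    push_neg at hlt
    have hstep : randomStep p s σ (Function.update σ i b) := ⟨i, b, rfl, hlt⟩
    have hmem' : Function.update σ i b ∈ setOf (Relation.ReflTransGen (randomStep p s) σ₀) :=
      hσmem.tail hstep
    have := hmin _ hmem'
    have := step_decrease p s hp hs hstep
    linarith
end

section
/- For two unrelated machines, if job i moving from machine a to machine b satisfies ℓ_b + 2p_{i,b} < ℓ_a + p_{i,a}, then the potential Φ(σ) = (ℓ_1 − ℓ_2)² + 3Σ_i p_{i,σ(i)}² strictly decreases; in fact Φ(σ') − Φ(σ) = 2(p_{i,a} + p_{i,b})·[(2p_{i,b} + ℓ_b) − (p_{i,a} + ℓ_a)]. -/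
/-! Moving job `i` from `a` to `b` changes only `ℓ_a` (by `-p_{i,a}`), `ℓ_b` (by `+p_{i,b}`) and
one square in the second term of `Φ`. Since `(ℓ₁ - ℓ₂)²` is symmetric in the two machines, it can
be read as `(ℓ_a - ℓ_b)²`, and the change of `Φ` is a polynomial identity in `ℓ_a, ℓ_b, p_{i,a},
p_{i,b}`. Its second factor is negative exactly for a better response, its first positive. -/

open Finset Function

theorem Fintype.sum_apply_update {ι α β : Type*} [Fintype ι] [DecidableEq ι]
    [AddCommGroup β] (g : ι → α → β) (σ : ι → α) (i : ι) (b : α) :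
    ∑ x, g x (update σ i b x) = ∑ x, g x (σ x) + (g i b - g i (σ i)) := by
  simp_rw [apply_update g σ i b]
  rw [sum_update_of_mem (mem_univ i), sum_eq_add_sum_sdiff_singleton_of_mem (mem_univ i)]
  abel

section Loads

variable {ι M : Type*} [Fintype ι] [DecidableEq M]

def machineLoad (p : ι → M → ℝ) (σ : ι → M) (j : M) : ℝ :=
  ∑ x ∈ univ.filter (fun x => σ x = j), p x j

theorem machineLoad_eq_sum_ite (p : ι → M → ℝ) (σ : ι → M) (j : M) :
    machineLoad p σ j = ∑ x, if σ x = j then p x j else 0 :=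
  sum_filter _ _

variable [DecidableEq ι] (p : ι → M → ℝ) (σ : ι → M) {i : ι} {b : M}

theorem machineLoad_update (j : M) :
    machineLoad p (update σ i b) j =
      machineLoad p σ j + ((if b = j then p i j else 0) - if σ i = j then p i j else 0) := by
  simp only [machineLoad_eq_sum_ite]
  exact Fintype.sum_apply_update (fun x m => if m = j then p x j else 0) σ i b

theorem machineLoad_update_source (hb : b ≠ σ i) :
    machineLoad p (update σ i b) (σ i) = machineLoad p σ (σ i) - p i (σ i) := by
  rw [machineLoad_update, if_neg hb, if_pos rfl]
  ring

theorem machineLoad_update_target (hb : b ≠ σ i) :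
    machineLoad p (update σ i b) b = machineLoad p σ b + p i b := by
  rw [machineLoad_update, if_pos rfl, if_neg hb.symm]
  ring

end Loads

theorem sub_sq_fin_two_eq (f : Fin 2 → ℝ) {a b : Fin 2} (hab : b ≠ a) :
    (f 0 - f 1) ^ 2 = (f a - f b) ^ 2 := by
  fin_cases a <;> fin_cases b <;> simp [sub_sq_comm] at hab ⊢

section Potential

variable {ι : Type*} [Fintype ι] [DecidableEq ι] (p : ι → Fin 2 → ℝ) (σ : ι → Fin 2)
  {i : ι} {b : Fin 2}

def randomPotential : ℝ :=
  (machineLoad p σ 0 - machineLoad p σ 1) ^ 2 + 3 * ∑ x, p x (σ x) ^ 2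

theorem randomPotential_update_sub (hb : b ≠ σ i) :
    randomPotential p (update σ i b) - randomPotential p σ =
      2 * (p i (σ i) + p i b) *
        ((2 * p i b + machineLoad p σ b) - (p i (σ i) + machineLoad p σ (σ i))) := by
  simp only [randomPotential]
  rw [sub_sq_fin_two_eq (machineLoad p (update σ i b)) hb,
    sub_sq_fin_two_eq (machineLoad p σ) hb, machineLoad_update_source p σ hb,
    machineLoad_update_target p σ hb, Fintype.sum_apply_update (fun x m => p x m ^ 2)]
  ring

theorem randomPotential_update_lt (hb : b ≠ σ i) (hpos : 0 < p i (σ i) + p i b)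
    (hmove : machineLoad p σ b + 2 * p i b < machineLoad p σ (σ i) + p i (σ i)) :
    randomPotential p (update σ i b) < randomPotential p σ := by
  have hgain := randomPotential_update_sub p σ hb
  have hneg : 2 * (p i (σ i) + p i b) *
      ((2 * p i b + machineLoad p σ b) - (p i (σ i) + machineLoad p σ (σ i))) < 0 :=
    mul_neg_of_pos_of_neg (by positivity) (by linarith)
  linarith

end Potential

/-- RANDOM policy on 2 unrelated machines. A better response move of
job `i` from machine `a = σ i` to machine `b` (i.e. `ℓ_b + 2 p_{i,b} < ℓ_a + p_{i,a}`)
strictly decreases the potential `Φ(σ) = (ℓ₁ − ℓ₂)² + 3 Σ_i p_{i,σ(i)}²`; in fact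
`Φ(σ') − Φ(σ) = 2 (p_{i,a} + p_{i,b}) ((2 p_{i,b} + ℓ_b) − (p_{i,a} + ℓ_a))`. -/
theorem random_two_unrelated_potential_decreases
    {n : ℕ} (p : Fin n → Fin 2 → ℝ) (hp : ∀ i j, 0 < p i j)
    (σ : Fin n → Fin 2) (i : Fin n) (b : Fin 2) (hb : b ≠ σ i)
    (load : (Fin n → Fin 2) → Fin 2 → ℝ)
    (hload : ∀ τ j, load τ j = ∑ i' ∈ Finset.univ.filter (fun i' => τ i' = j), p i' j)
    (Φ : (Fin n → Fin 2) → ℝ)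
    (hΦ : ∀ τ, Φ τ = (load τ 0 - load τ 1) ^ 2 + 3 * ∑ i', (p i' (τ i')) ^ 2)
    (hmove : load σ b + 2 * p i b < load σ (σ i) + p i (σ i)) :
    Φ (Function.update σ i b) - Φ σ =
      2 * (p i (σ i) + p i b) *
        ((2 * p i b + load σ b) - (p i (σ i) + load σ (σ i))) ∧
    Φ (Function.update σ i b) < Φ σ := by
  obtain rfl : load = machineLoad p := funext₂ hload
  obtain rfl : Φ = randomPotential p := funext hΦ
  exact ⟨randomPotential_update_sub p σ hb,
    randomPotential_update_lt p σ hb (add_pos (hp i (σ i)) (hp i b)) hmove⟩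
end

section
/- The scheduling game on unrelated machines under the EQUI policy always admits a pure Nash equilibrium, and every sequence of better response moves is finite. -/
open Finset

/-- EQUI cost of job `i` in profile `σ` on unrelated machines. -/
def equiCost {n m : ℕ} (p : Fin n → Fin m → ℝ) (σ : Fin n → Fin m) (i : Fin n) : ℝ :=
  ∑ i' ∈ Finset.univ.filter (fun i' => σ i' = σ i), min (p i (σ i)) (p i' (σ i))

/-- A better response move under EQUI. -/
def equiStep {n m : ℕ} (p : Fin n → Fin m → ℝ) (σ σ' : Fin n → Fin m) : Prop :=
  ∃ (i : Fin n) (b : Fin m), σ' = Function.update σ i b ∧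
    equiCost p σ' i < equiCost p σ i

/-- Pure Nash equilibrium under EQUI. -/
def equiNE {n m : ℕ} (p : Fin n → Fin m → ℝ) (σ : Fin n → Fin m) : Prop :=
  ∀ (i : Fin n) (b : Fin m), equiCost p σ i ≤ equiCost p (Function.update σ i b) i

/-- pairwise interaction term -/
noncomputable def equiG {n m : ℕ} (p : Fin n → Fin m → ℝ) (σ : Fin n → Fin m)
    (i' i'' : Fin n) : ℝ :=
  if σ i'' = σ i' then min (p i' (σ i')) (p i'' (σ i')) else 0

lemma equiG_symm {n m : ℕ} (p : Fin n → Fin m → ℝ) (σ : Fin n → Fin m) (i' i'' : Fin n) :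
    equiG p σ i' i'' = equiG p σ i'' i' := by
  unfold equiG
  rcases eq_or_ne (σ i'') (σ i') with h | h
  · simp [h, min_comm]
  · simp [h, h.symm]

lemma equiCost_eq_sum_g {n m : ℕ} (p : Fin n → Fin m → ℝ) (σ : Fin n → Fin m) (i : Fin n) :
    equiCost p σ i = ∑ i', equiG p σ i i' := by
  unfold equiCost equiG
  rw [Finset.sum_filter]

/-- Potential function. -/
noncomputable def equiPhi {n m : ℕ} (p : Fin n → Fin m → ℝ) (σ : Fin n → Fin m) : ℝ :=
  (∑ i, equiCost p σ i) + ∑ i, p i (σ i)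

lemma equiPhi_eq {n m : ℕ} (p : Fin n → Fin m → ℝ) (σ : Fin n → Fin m) (i : Fin n) :
    equiPhi p σ = 2 * equiCost p σ i
      + (∑ i' ∈ univ.erase i, ∑ i'' ∈ univ.erase i, equiG p σ i' i'')
      + ∑ i' ∈ univ.erase i, p i' (σ i') := by
  have hgii : equiG p σ i i = p i (σ i) := by simp [equiG]
  have h1 : (∑ i', equiCost p σ i') = ∑ i', ∑ i'', equiG p σ i' i'' :=
    Finset.sum_congr rfl fun i' _ => equiCost_eq_sum_g p σ i'
  have h2 : (∑ i', ∑ i'', equiG p σ i' i'')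
      = (∑ i'', equiG p σ i i'')
        + ∑ i' ∈ univ.erase i, ∑ i'', equiG p σ i' i'' :=
    (Finset.add_sum_erase univ _ (mem_univ i)).symm
  have h3 : ∀ i' : Fin n, (∑ i'', equiG p σ i' i'')
      = equiG p σ i' i + ∑ i'' ∈ univ.erase i, equiG p σ i' i'' :=
    fun i' => (Finset.add_sum_erase univ _ (mem_univ i)).symm
  have h4 : (∑ i' ∈ univ.erase i, equiG p σ i' i) = ∑ i' ∈ univ.erase i, equiG p σ i i' :=
    Finset.sum_congr rfl fun i' _ => equiG_symm p σ i' i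
  have h5 : equiCost p σ i = equiG p σ i i + ∑ i'' ∈ univ.erase i, equiG p σ i i'' := by
    rw [equiCost_eq_sum_g]; exact (Finset.add_sum_erase univ _ (mem_univ i)).symm
  have h7 : (∑ i', p i' (σ i')) = p i (σ i) + ∑ i' ∈ univ.erase i, p i' (σ i') :=
    (Finset.add_sum_erase univ _ (mem_univ i)).symm
  unfold equiPhi
  rw [h1, h2, h7]
  have h8 : (∑ i' ∈ univ.erase i, ∑ i'', equiG p σ i' i'')
      = (∑ i' ∈ univ.erase i, equiG p σ i i')
        + ∑ i' ∈ univ.erase i, ∑ i'' ∈ univ.erase i, equiG p σ i' i'' := by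
    rw [← h4, ← Finset.sum_add_distrib]
    exact Finset.sum_congr rfl fun i' _ => h3 i'
  rw [h8]
  have h0 : (∑ i'', equiG p σ i i'') = equiCost p σ i := (equiCost_eq_sum_g p σ i).symm
  linarith [h0, h5, hgii]

lemma equiPhi_decrease {n m : ℕ} (p : Fin n → Fin m → ℝ) {σ σ' : Fin n → Fin m}
    (h : equiStep p σ σ') : equiPhi p σ' < equiPhi p σ := by
  obtain ⟨i, b, hσ', hlt⟩ := h
  have hR : (∑ i' ∈ univ.erase i, ∑ i'' ∈ univ.erase i, equiG p σ' i' i'')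
      = ∑ i' ∈ univ.erase i, ∑ i'' ∈ univ.erase i, equiG p σ i' i'' := by
    refine Finset.sum_congr rfl fun i' h1 => Finset.sum_congr rfl fun i'' h2 => ?_
    have h1' := Finset.ne_of_mem_erase h1
    have h2' := Finset.ne_of_mem_erase h2
    simp [equiG, hσ', Function.update_of_ne h1', Function.update_of_ne h2']
  have hP : (∑ i' ∈ univ.erase i, p i' (σ' i')) = ∑ i' ∈ univ.erase i, p i' (σ i') := by
    refine Finset.sum_congr rfl fun i' h1 => ?_
    have h1' := Finset.ne_of_mem_erase h1
    simp [hσ', Function.update_of_ne h1']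
  rw [equiPhi_eq p σ i, equiPhi_eq p σ' i, hR, hP]
  linarith

/-- The scheduling game on unrelated machines under EQUI always admits a
pure Nash equilibrium, and every sequence of better response moves is finite. -/
theorem equi_has_NE_and_converges
    {n m : ℕ} (hm : 0 < m) (p : Fin n → Fin m → ℝ) (hp : ∀ i j, 0 < p i j) :
    (∃ σ : Fin n → Fin m, equiNE p σ) ∧
    (¬ ∃ f : ℕ → (Fin n → Fin m), ∀ t, equiStep p (f t) (f (t + 1))) := by
  have hterm : ¬ ∃ f : ℕ → (Fin n → Fin m), ∀ t, equiStep p (f t) (f (t + 1)) := by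
    rintro ⟨f, hf⟩
    have hanti : StrictAnti (fun t => equiPhi p (f t)) :=
      strictAnti_nat_of_succ_lt fun t => equiPhi_decrease p (hf t)
    have hinj : Function.Injective f := fun a b hab => hanti.injective (by simp [hab])
    exact not_injective_infinite_finite f hinj
  refine ⟨?_, hterm⟩
  by_contra hno
  push_neg at hno
  have hstep : ∀ σ : Fin n → Fin m, ∃ σ', equiStep p σ σ' := by
    intro σ
    have h := hno σ
    unfold equiNE at h
    push_neg at h
    obtain ⟨i, b, hlt⟩ := h
    exact ⟨Function.update σ i b, i, b, rfl, hlt⟩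
  choose next hnext using hstep
  refine hterm ⟨fun t => next^[t] (fun _ => ⟨0, hm⟩), fun t => ?_⟩
  simpa [Function.iterate_succ_apply'] using hnext (next^[t] (fun _ => ⟨0, hm⟩))
end

section
/- In any pure Nash equilibrium under the EQUI policy, if a coalition T makes a collective move in which every job of T strictly improves its cost, then the move preserves the number of jobs on every machine. -/
/-! Fix a machine `j` and let `i` be the job of `T` that `σ'` puts on `j` with the smallest
processing time there. Under EQUI each coalition partner on `j` then costs `i` exactly `p i j`,
so `i` pays `|T ∩ σ'⁻¹ j| · p i j` to `T` in `σ'`, while deviating alone from `σ` to `j` would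
cost it at most `(1 + |T ∩ σ⁻¹ j|) · p i j` plus the same contribution of the jobs outside `T`.
Strict improvement and the Nash condition thus give `|T ∩ σ'⁻¹ j| ≤ |T ∩ σ⁻¹ j|` for every `j`;
both sides sum to `|T|` over `j`, so all are equalities, and the jobs outside `T` stay put. -/

open Finset

theorem sum_fiber_split_of_eqOn_compl {α β M : Type*} [Fintype α] [DecidableEq α] [DecidableEq β]
    [AddCommMonoid M] {σ σ' : α → β} {T : Finset α}
    (hout : ∀ i ∉ T, σ' i = σ i) (g : α → M) (j : β) :
    ∑ i ∈ univ.filter (fun i => σ' i = j), g i =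
      ∑ i ∈ T.filter (fun i => σ' i = j), g i + ∑ i ∈ Tᶜ.filter (fun i => σ i = j), g i := by
  rw [sum_filter, sum_filter, sum_filter, ← sum_add_sum_compl T]
  congr 1
  exact sum_congr rfl fun i hi => by rw [hout i (mem_compl.mp hi)]

theorem card_fiber_eq_of_forall_le {α β : Type*} [Fintype β] [DecidableEq β]
    {σ σ' : α → β} {T : Finset α}
    (hle : ∀ j, #(T.filter (fun i => σ' i = j)) ≤ #(T.filter (fun i => σ i = j))) (j : β) :
    #(T.filter (fun i => σ' i = j)) = #(T.filter (fun i => σ i = j)) := by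
  have htotal : ∑ j, #(T.filter (fun i => σ' i = j)) = ∑ j, #(T.filter (fun i => σ i = j)) := by
    rw [← card_eq_sum_card_fiberwise fun _ _ => mem_univ _,
      ← card_eq_sum_card_fiberwise fun _ _ => mem_univ _]
  exact (sum_eq_sum_iff_of_le fun j _ => hle j).mp htotal j (mem_univ j)

theorem sum_insert_le_of_nonneg {α M : Type*} [DecidableEq α] [AddCommMonoid M] [PartialOrder M]
    [IsOrderedAddMonoid M] {s : Finset α} {f : α → M} {a : α} (hf : 0 ≤ f a) :
    ∑ x ∈ insert a s, f x ≤ f a + ∑ x ∈ s, f x := by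
  by_cases ha : a ∈ s
  · rw [insert_eq_of_mem ha]
    exact le_add_of_nonneg_left hf
  · rw [sum_insert ha]

section Equi

variable {n m : ℕ} {p : Fin n → Fin m → ℝ}

theorem equiCost_update_le (hp : ∀ i j, 0 < p i j) (σ : Fin n → Fin m) (i : Fin n) (j : Fin m) :
    equiCost p (Function.update σ i j) i ≤
      p i j + ∑ i' ∈ univ.filter (fun i' => σ i' = j), min (p i j) (p i' j) := by
  have hfiber : univ.filter (fun i' => Function.update σ i j i' = j) =
      insert i (univ.filter (fun i' => σ i' = j)) := by
    ext i'
    rcases eq_or_ne i' i with rfl | hne <;> simp [*]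
  unfold equiCost
  rw [Function.update_self, hfiber]
  refine (sum_insert_le_of_nonneg (f := fun i' => min (p i j) (p i' j)) ?_).trans_eq ?_
  · exact le_min (hp i j).le (hp i j).le
  · rw [min_self]

theorem sum_coalition_fiber_lt (hp : ∀ i j, 0 < p i j) {σ σ' : Fin n → Fin m} (hNE : equiNE p σ)
    {T : Finset (Fin n)} (hout : ∀ i ∉ T, σ' i = σ i)
    {i : Fin n} (himp : equiCost p σ' i < equiCost p σ i) :
    ∑ i' ∈ T.filter (fun i' => σ' i' = σ' i), min (p i (σ' i)) (p i' (σ' i)) <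
      p i (σ' i) + ∑ i' ∈ T.filter (fun i' => σ i' = σ' i), min (p i (σ' i)) (p i' (σ' i)) := by
  have hdev := (hNE i (σ' i)).trans (equiCost_update_le hp σ i (σ' i))
  have hσ' := sum_fiber_split_of_eqOn_compl hout (fun i' => min (p i (σ' i)) (p i' (σ' i))) (σ' i)
  have hσ := sum_fiber_split_of_eqOn_compl (σ := σ) (σ' := σ) (T := T) (fun _ _ => rfl)
    (fun i' => min (p i (σ' i)) (p i' (σ' i))) (σ' i)
  have hcost : equiCost p σ' i =
      ∑ i' ∈ univ.filter (fun i' => σ' i' = σ' i), min (p i (σ' i)) (p i' (σ' i)) := rfl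
  linarith

theorem card_coalition_fiber_le (hp : ∀ i j, 0 < p i j) {σ σ' : Fin n → Fin m} (hNE : equiNE p σ)
    {T : Finset (Fin n)} (hout : ∀ i ∉ T, σ' i = σ i)
    (himp : ∀ i ∈ T, equiCost p σ' i < equiCost p σ i) (j : Fin m) :
    #(T.filter (fun i => σ' i = j)) ≤ #(T.filter (fun i => σ i = j)) := by
  rcases (T.filter (fun i => σ' i = j)).eq_empty_or_nonempty with hempty | hne
  · simp [hempty]
  obtain ⟨i, hi, hmin⟩ := exists_min_image _ (fun i => p i j) hne
  obtain ⟨hiT, rfl⟩ := mem_filter.mp hi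
  have hlt := sum_coalition_fiber_lt hp hNE hout (himp i hiT)
  have hleft : ∑ i' ∈ T.filter (fun i' => σ' i' = σ' i), min (p i (σ' i)) (p i' (σ' i)) =
      #(T.filter (fun i' => σ' i' = σ' i)) * p i (σ' i) := by
    rw [sum_congr rfl fun i' hi' => min_eq_left (hmin i' hi'), sum_const, nsmul_eq_mul]
  have hright : ∑ i' ∈ T.filter (fun i' => σ i' = σ' i), min (p i (σ' i)) (p i' (σ' i)) ≤
      #(T.filter (fun i' => σ i' = σ' i)) * p i (σ' i) := by
    rw [← nsmul_eq_mul, ← sum_const]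
    exact sum_le_sum fun _ _ => min_le_left _ _
  have hcard : (#(T.filter (fun i' => σ' i' = σ' i)) : ℝ) * p i (σ' i) <
      (1 + #(T.filter (fun i' => σ i' = σ' i))) * p i (σ' i) := by
    rw [← hleft]; linarith
  exact Nat.lt_one_add_iff.mp (by exact_mod_cast lt_of_mul_lt_mul_right hcard (hp i (σ' i)).le)

end Equi

/-- In any pure Nash equilibrium under EQUI, if a coalition `T` makes a
collective move in which every job of `T` strictly improves its cost, then the move
preserves the number of jobs on every machine. -/
theorem equi_coalition_preserves_counts
    {n m : ℕ} (p : Fin n → Fin m → ℝ) (hp : ∀ i j, 0 < p i j)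
    (σ : Fin n → Fin m) (hNE : equiNE p σ)
    (T : Finset (Fin n)) (σ' : Fin n → Fin m)
    (hout : ∀ i ∉ T, σ' i = σ i)
    (himp : ∀ i ∈ T, equiCost p σ' i < equiCost p σ i) :
    ∀ j : Fin m,
      (Finset.univ.filter (fun i => σ i = j)).card =
        (Finset.univ.filter (fun i => σ' i = j)).card := by
  intro j
  have hcoal := card_fiber_eq_of_forall_le (card_coalition_fiber_le hp hNE hout himp) j
  have hσ' := sum_fiber_split_of_eqOn_compl hout (fun _ => 1) j
  have hσ := sum_fiber_split_of_eqOn_compl (σ' := σ) (T := T) (fun _ _ => rfl) (fun _ => 1) j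
  simp only [sum_const, smul_eq_mul, mul_one] at hσ hσ'
  rw [hσ, hσ', hcoal]
end

section
/- On m identical machines under the EQUI policy, the makespan of any pure Nash equilibrium is at most (2 − 1/m) times the optimal makespan. -/
/-- Load of machine `j` (identical machines, job lengths `p`). -/
def idLoad {n m : ℕ} (p : Fin n → ℝ) (σ : Fin n → Fin m) (j : Fin m) : ℝ :=
  ∑ i ∈ Finset.univ.filter (fun i => σ i = j), p i

/-- EQUI cost of job `i` on identical machines: `Σ_{i' : σ i' = σ i} min(p_i, p_{i'})`. -/
def idEquiCost {n m : ℕ} (p : Fin n → ℝ) (σ : Fin n → Fin m) (i : Fin n) : ℝ :=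
  ∑ i' ∈ Finset.univ.filter (fun i' => σ i' = σ i), min (p i) (p i')

/-- Pure Nash equilibrium under EQUI on identical machines. -/
def idEquiNE {n m : ℕ} (p : Fin n → ℝ) (σ : Fin n → Fin m) : Prop :=
  ∀ (i : Fin n) (b : Fin m), idEquiCost p σ i ≤ idEquiCost p (Function.update σ i b) i

/-- On `m` identical machines under EQUI, the makespan of any pure Nash
equilibrium is at most `(2 − 1/m)` times the optimal makespan. -/
theorem equi_identical_poa_upper
    {n m : ℕ} (hm : 0 < m) (p : Fin n → ℝ) (hp : ∀ i, 0 < p i)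
    (σ : Fin n → Fin m) (hNE : idEquiNE p σ) :
    ∀ τ : Fin n → Fin m,
      (⨆ j, idLoad p σ j) ≤ (2 - 1 / (m : ℝ)) * ⨆ j, idLoad p τ j := by
  intro τ
  haveI : Nonempty (Fin m) := ⟨⟨0, hm⟩⟩
  have hm' : (0 : ℝ) < (m : ℝ) := by exact_mod_cast hm
  have hm1 : (1 : ℝ) ≤ (m : ℝ) := by exact_mod_cast hm
  set OPT := ⨆ j, idLoad p τ j with hOPTdef
  have hload_nonneg : ∀ (ρ : Fin n → Fin m) (j : Fin m), 0 ≤ idLoad p ρ j := fun ρ j =>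
    Finset.sum_nonneg fun i _ => (hp i).le
  have hτ_le : ∀ j, idLoad p τ j ≤ OPT := fun j =>
    le_ciSup (Set.Finite.bddAbove (Set.finite_range _)) j
  have hOPT0 : (0 : ℝ) ≤ OPT := le_trans (hload_nonneg τ ⟨0, hm⟩) (hτ_le _)
  have hcoef : (1 : ℝ) ≤ 2 - 1 / (m : ℝ) := by
    have : 1 / (m : ℝ) ≤ 1 := by
      rw [div_le_one hm']; exact hm1
    linarith
  have hsum : ∀ ρ : Fin n → Fin m, ∑ j, idLoad p ρ j = ∑ i, p i := by
    intro ρ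
    simpa [idLoad] using Finset.sum_fiberwise (Finset.univ) ρ p
  have hsumσ_le : ∑ j, idLoad p σ j ≤ (m : ℝ) * OPT := by
    rw [hsum σ, ← hsum τ]
    calc ∑ j, idLoad p τ j ≤ ∑ _j : Fin m, OPT :=
          Finset.sum_le_sum fun j _ => hτ_le j
      _ = (m : ℝ) * OPT := by simp [Finset.sum_const, mul_comm]
  apply ciSup_le
  intro j
  by_cases hS : (Finset.univ.filter (fun i => σ i = j)).Nonempty
  · obtain ⟨i, hiS, hmax⟩ := Finset.exists_max_image _ p hS
    have hσi : σ i = j := (Finset.mem_filter.mp hiS).2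
    have hpiOPT : p i ≤ OPT := by
      have h1 : p i ≤ idLoad p τ (τ i) := by
        apply Finset.single_le_sum (f := p) (fun i' _ => (hp i').le)
        simp
      exact h1.trans (hτ_le _)
    have hcost : idEquiCost p σ i = idLoad p σ j := by
      unfold idEquiCost idLoad
      rw [hσi]
      apply Finset.sum_congr rfl
      intro i' hi'
      exact min_eq_right (hmax i' hi')
    have hkey : ∀ b, idLoad p σ j ≤ idLoad p σ b + p i := by
      intro b
      by_cases hbj : b = j
      · subst hbj; linarith [(hp i).le]
      · have h1 := hNE i b
        rw [hcost] at h1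
        refine h1.trans ?_
        unfold idEquiCost
        have hupd : Function.update σ i b i = b := by simp
        rw [hupd]
        set T := Finset.univ.filter (fun i' => Function.update σ i b i' = b) with hT
        have hiT : i ∈ T := by simp [hT]
        rw [← Finset.sum_erase_add _ _ hiT]
        have h2 : ∑ i' ∈ T.erase i, min (p i) (p i') ≤ idLoad p σ b := by
          unfold idLoad
          refine le_trans (Finset.sum_le_sum fun i' _ => min_le_right _ _) ?_
          apply Finset.sum_le_sum_of_subset_of_nonneg
          · intro x hx
            obtain ⟨hxi, hxT⟩ := Finset.mem_erase.mp hx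
            simp only [hT, Finset.mem_filter, Finset.mem_univ, true_and] at hxT
            rw [Function.update_of_ne hxi] at hxT
            simp [hxT]
          · exact fun x _ _ => (hp x).le
        have h3 : min (p i) (p i) = p i := min_self _
        linarith
    have hcard : ((Finset.univ.erase j).card : ℝ) = (m : ℝ) - 1 := by
      rw [Finset.card_erase_of_mem (Finset.mem_univ j)]
      simp [Nat.cast_sub hm]
    have havg : ((m : ℝ) - 1) * idLoad p σ j ≤
        (∑ b, idLoad p σ b - idLoad p σ j) + ((m : ℝ) - 1) * p i := by
      have h4 : ∑ _b ∈ Finset.univ.erase j, idLoad p σ j ≤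
          ∑ b ∈ Finset.univ.erase j, (idLoad p σ b + p i) :=
        Finset.sum_le_sum fun b _ => hkey b
      rw [Finset.sum_const, Finset.sum_add_distrib, Finset.sum_const] at h4
      have h5 : ∑ b ∈ Finset.univ.erase j, idLoad p σ b =
          ∑ b, idLoad p σ b - idLoad p σ j := by
        rw [eq_sub_iff_add_eq, Finset.sum_erase_add _ _ (Finset.mem_univ j)]
      rw [h5] at h4
      calc ((m : ℝ) - 1) * idLoad p σ j
          = ((Finset.univ.erase j).card : ℝ) * idLoad p σ j := by rw [hcard]
        _ = (Finset.univ.erase j).card • idLoad p σ j := by rw [nsmul_eq_mul]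
        _ ≤ (∑ b, idLoad p σ b - idLoad p σ j) + (Finset.univ.erase j).card • p i := h4
        _ = (∑ b, idLoad p σ b - idLoad p σ j) + ((m : ℝ) - 1) * p i := by
            rw [nsmul_eq_mul, hcard]
    have hmain : (m : ℝ) * idLoad p σ j ≤ (2 * (m : ℝ) - 1) * OPT := by
      nlinarith [hsumσ_le, hpiOPT, hOPT0]
    rw [show (2 - 1 / (m : ℝ)) = (2 * (m : ℝ) - 1) / (m : ℝ) by
      field_simp]
    rw [div_mul_eq_mul_div, le_div_iff₀ hm']
    linarith [hmain]
  · have hzero : idLoad p σ j = 0 := by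
      unfold idLoad
      rw [Finset.not_nonempty_iff_eq_empty.mp hS, Finset.sum_empty]
    rw [hzero]
    exact mul_nonneg (by linarith) hOPT0
end

section
/- For every m ≥ 2 there is an instance on m identical machines with m(m−1) unit jobs and one job of length m in which every pure Nash equilibrium under EQUI has makespan at least (2 − 2/m) times the optimal makespan; in particular OPT = m and every equilibrium has makespan at least 2m − 2. -/
/-!
The total load is `m²`, so every schedule has makespan at least `m`, and putting the long job
alone on one machine and `m` unit jobs on each other machine attains it. A unit job's EQUI cost
is the number of jobs on its machine, so in an equilibrium no machine holds more than one job
beyond the `c` jobs sharing the long job's machine. Counting the `m(m-1)+1` jobs then gives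
`c ≥ m-1`, and that machine carries load `(c-1) + m ≥ 2m-2`.
-/

open Finset

section Schedules

variable {n m : ℕ}

def numJobs (σ : Fin n → Fin m) (j : Fin m) : ℕ :=
  #{i | σ i = j}

theorem sum_numJobs (σ : Fin n → Fin m) : ∑ j, numJobs σ j = n := by
  simpa [numJobs] using (card_eq_sum_card_fiberwise (f := σ) (s := univ) (t := univ)
    fun i _ => mem_univ (σ i)).symm

theorem numJobs_update_self (σ : Fin n → Fin m) {i : Fin n} {b : Fin m} (h : σ i ≠ b) :
    numJobs (Function.update σ i b) b = numJobs σ b + 1 := by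
  have hfiber : univ.filter (fun i' => Function.update σ i b i' = b)
      = insert i (univ.filter fun i' => σ i' = b) := by
    ext x
    by_cases hx : x = i
    · subst hx; simp
    · simp [hx]
  rw [numJobs, numJobs, hfiber, card_insert_of_notMem (by simp [h])]

theorem sum_idLoad (p : Fin n → ℝ) (σ : Fin n → Fin m) : ∑ j, idLoad p σ j = ∑ i, p i :=
  sum_fiberwise_of_maps_to (fun i _ => mem_univ (σ i)) p

theorem idLoad_le_iSup (p : Fin n → ℝ) (σ : Fin n → Fin m) (j : Fin m) :
    idLoad p σ j ≤ ⨆ j, idLoad p σ j :=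
  le_ciSup (Set.finite_range _).bddAbove j

theorem sum_le_mul_iSup_idLoad (p : Fin n → ℝ) (σ : Fin n → Fin m) :
    ∑ i, p i ≤ m * ⨆ j, idLoad p σ j := by
  calc ∑ i, p i = ∑ j, idLoad p σ j := (sum_idLoad p σ).symm
    _ ≤ ∑ _j : Fin m, ⨆ j, idLoad p σ j := sum_le_sum fun j _ => idLoad_le_iSup p σ j
    _ = m * ⨆ j, idLoad p σ j := by simp

theorem idEquiCost_eq_mul_numJobs {p : Fin n → ℝ} (σ : Fin n → Fin m) {i : Fin n}
    (hmin : ∀ k, p i ≤ p k) : idEquiCost p σ i = p i * numJobs σ (σ i) := by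
  rw [idEquiCost, sum_congr rfl fun k _ => min_eq_left (hmin k), sum_const, nsmul_eq_mul,
    numJobs, mul_comm]

theorem idEquiNE.numJobs_le_succ {p : Fin n → ℝ} {σ : Fin n → Fin m} (hσ : idEquiNE p σ)
    {i : Fin n} (hpos : 0 < p i) (hmin : ∀ k, p i ≤ p k) (b : Fin m) :
    numJobs σ (σ i) ≤ numJobs σ b + 1 := by
  by_cases hb : σ i = b
  · rw [hb]; omega
  have hmove := hσ i b
  rw [idEquiCost_eq_mul_numJobs σ hmin, idEquiCost_eq_mul_numJobs _ hmin,
    Function.update_self, numJobs_update_self σ hb] at hmove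
  exact_mod_cast le_of_mul_le_mul_left hmove hpos

end Schedules

theorem sum_add_one_le_card_mul {ι : Type*} [Fintype ι] {f : ι → ℕ} {j : ι}
    (hf : ∀ b, f b ≤ f j + 1) : ∑ b, f b + 1 ≤ Fintype.card ι * (f j + 1) := by
  classical
  have hrest : ∑ b ∈ univ.erase j, f b ≤ (Fintype.card ι - 1) * (f j + 1) := by
    simpa [card_erase_of_mem (mem_univ j)] using
      sum_le_card_nsmul (univ.erase j) f (f j + 1) fun b _ => hf b
  have hcard : 0 < Fintype.card ι := Fintype.card_pos_iff.mpr ⟨j⟩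
  rw [← add_sum_erase univ f (mem_univ j)]
  obtain ⟨k, hk⟩ : ∃ k, Fintype.card ι = k + 1 := ⟨_, (Nat.succ_pred_eq_of_pos hcard).symm⟩
  rw [hk] at hrest ⊢
  simp only [add_tsub_cancel_right] at hrest
  nlinarith

theorem card_filter_div_eq_le {m : ℕ} (hm : 0 < m) (n j : ℕ) :
    #({i | i.val / m = j} : Finset (Fin n)) ≤ m := by
  calc #({i | i.val / m = j} : Finset (Fin n)) ≤ #(range m) := by
        refine card_le_card_of_injOn (fun i => i.val % m)
          (fun i _ => mem_range.mpr (Nat.mod_lt _ hm)) fun i₁ h₁ i₂ h₂ hmod => Fin.ext ?_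
        simp only [coe_filter, mem_univ, true_and, Set.mem_ofPred_eq] at h₁ h₂
        rw [← Nat.div_add_mod i₁.val m, ← Nat.div_add_mod i₂.val m, h₁, h₂]
        exact congrArg _ hmod
    _ = m := card_range m

def IsPoaInstance (m : ℕ) (p : Fin (m * (m - 1) + 1) → ℝ) : Prop :=
  ∀ i, p i = if i.val < m * (m - 1) then 1 else (m : ℝ)

namespace IsPoaInstance

variable {m : ℕ} {p : Fin (m * (m - 1) + 1) → ℝ}

theorem apply_last (hp : IsPoaInstance m p) : p (Fin.last _) = m := by
  simp [hp _]

theorem apply_of_ne_last (hp : IsPoaInstance m p) {i : Fin (m * (m - 1) + 1)}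
    (hi : i ≠ Fin.last _) : p i = 1 := by
  rw [hp i, if_pos (Fin.val_lt_last hi)]

theorem apply_eq (hp : IsPoaInstance m p) (i : Fin (m * (m - 1) + 1)) :
    p i = 1 + if i = Fin.last _ then (m : ℝ) - 1 else 0 := by
  by_cases hi : i = Fin.last _
  · rw [hi, hp.apply_last, if_pos rfl]; ring
  · rw [hp.apply_of_ne_last hi, if_neg hi, add_zero]

theorem one_le_apply (hp : IsPoaInstance m p) (hm : 1 ≤ m) (i : Fin (m * (m - 1) + 1)) :
    1 ≤ p i := by
  by_cases hi : i = Fin.last _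
  · rw [hi, hp.apply_last]; exact_mod_cast hm
  · rw [hp.apply_of_ne_last hi]

theorem sum_eq (hp : IsPoaInstance m p) (hm : 1 ≤ m) : ∑ i, p i = (m : ℝ) * m := by
  rw [Fin.sum_univ_castSucc, hp.apply_last]
  simp only [hp.apply_of_ne_last (Fin.castSucc_ne_last _), sum_const, card_univ,
    Fintype.card_fin, nsmul_eq_mul, mul_one]
  push_cast [Nat.cast_sub hm]
  ring

theorem idLoad_eq (hp : IsPoaInstance m p) (σ : Fin (m * (m - 1) + 1) → Fin m) (j : Fin m) :
    idLoad p σ j = numJobs σ j + if σ (Fin.last _) = j then (m : ℝ) - 1 else 0 := by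
  rw [idLoad, sum_congr rfl fun i _ => hp.apply_eq i, sum_add_distrib, sum_const,
    sum_ite_eq' _ (Fin.last _)]
  simp [numJobs]

theorem le_iSup_idLoad (hp : IsPoaInstance m p) (hm : 1 ≤ m)
    (τ : Fin (m * (m - 1) + 1) → Fin m) : (m : ℝ) ≤ ⨆ j, idLoad p τ j := by
  have hm₀ : (0 : ℝ) < m := by exact_mod_cast hm
  have := sum_le_mul_iSup_idLoad p τ
  rw [hp.sum_eq hm] at this
  exact le_of_mul_le_mul_left this hm₀

end IsPoaInstance

/-- Machines `0, …, m-2` receive `m` unit jobs each and machine `m-1` only the long job. -/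
def blockSchedule {m : ℕ} (hm : 0 < m) (i : Fin (m * (m - 1) + 1)) : Fin m :=
  ⟨i.val / m, Nat.div_lt_of_lt_mul (by
    have := i.isLt
    have : m * (m - 1) + m = m * m := by rw [← Nat.mul_add_one, Nat.sub_add_cancel hm]
    omega)⟩

theorem blockSchedule_eq_last_iff {m : ℕ} (hm : 0 < m) {i : Fin (m * (m - 1) + 1)} :
    blockSchedule hm i = blockSchedule hm (Fin.last _) ↔ i = Fin.last _ := by
  refine ⟨fun h => ?_, fun h => h ▸ rfl⟩
  by_contra hi
  have hlast : (Fin.last (m * (m - 1))).val / m = m - 1 := Nat.mul_div_cancel_left _ hm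
  have hlt : i.val / m < m - 1 := Nat.div_lt_of_lt_mul (Fin.val_lt_last hi)
  have := congrArg Fin.val h
  simp only [blockSchedule] at this
  omega

namespace IsPoaInstance

variable {m : ℕ} {p : Fin (m * (m - 1) + 1) → ℝ}

theorem iSup_idLoad_blockSchedule (hp : IsPoaInstance m p) (hm : 0 < m) :
    ⨆ j, idLoad p (blockSchedule hm) j = m := by
  have : Nonempty (Fin m) := ⟨⟨0, hm⟩⟩
  refine le_antisymm (ciSup_le fun j => ?_) (hp.le_iSup_idLoad hm _)
  rw [hp.idLoad_eq]
  split_ifs with hj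
  · subst hj
    have hone : numJobs (blockSchedule hm) (blockSchedule hm (Fin.last _)) = 1 := by
      simp [numJobs, blockSchedule_eq_last_iff, filter_eq']
    rw [hone, Nat.cast_one]
    linarith
  · have hblock : numJobs (blockSchedule hm) j ≤ m := by
      simpa [numJobs, blockSchedule, Fin.ext_iff] using card_filter_div_eq_le hm _ j.val
    simpa using (Nat.cast_le (α := ℝ)).mpr hblock

theorem numJobs_le_numJobs_last_succ (hp : IsPoaInstance m p) (hm : 1 ≤ m)
    {σ : Fin (m * (m - 1) + 1) → Fin m} (hσ : idEquiNE p σ) (b : Fin m) :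
    numJobs σ b ≤ numJobs σ (σ (Fin.last _)) + 1 := by
  rcases Nat.eq_zero_or_pos (numJobs σ b) with hempty | hbusy
  · omega
  obtain ⟨i, hi⟩ := card_pos.mp hbusy
  rw [mem_filter] at hi
  by_cases hlast : i = Fin.last _
  · rw [← hi.2, ← hlast]; omega
  have hunit := hp.apply_of_ne_last hlast
  rw [← hi.2]
  exact hσ.numJobs_le_succ (by rw [hunit]; exact one_pos)
    (fun k => hunit ▸ hp.one_le_apply hm k) _

theorem sub_one_le_numJobs_last (hp : IsPoaInstance m p) (hm : 1 ≤ m)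
    {σ : Fin (m * (m - 1) + 1) → Fin m} (hσ : idEquiNE p σ) :
    m - 1 ≤ numJobs σ (σ (Fin.last _)) := by
  have hcount := sum_add_one_le_card_mul (hp.numJobs_le_numJobs_last_succ hm hσ)
  rw [sum_numJobs, Fintype.card_fin] at hcount
  by_contra! hfew
  have := Nat.mul_le_mul_left m (show numJobs σ (σ (Fin.last _)) + 1 ≤ m - 1 by omega)
  omega

end IsPoaInstance

/-- For every `m ≥ 2`, the instance on `m` identical machines with
`m(m−1)` unit jobs and one job of length `m` has optimal makespan exactly `m`, and
every pure Nash equilibrium under EQUI has makespan at least `2m − 2 = (2 − 2/m)·OPT`. -/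
theorem equi_identical_poa_lower_all_equilibria
    (m : ℕ) (hm : 2 ≤ m) (p : Fin (m * (m - 1) + 1) → ℝ)
    (hp : ∀ i, p i = if i.val < m * (m - 1) then 1 else (m : ℝ)) :
    (∃ τ : Fin (m * (m - 1) + 1) → Fin m, (⨆ j, idLoad p τ j) = (m : ℝ)) ∧
    (∀ τ : Fin (m * (m - 1) + 1) → Fin m, (m : ℝ) ≤ ⨆ j, idLoad p τ j) ∧
    (∀ σ : Fin (m * (m - 1) + 1) → Fin m, idEquiNE p σ →
      (2 - 2 / (m : ℝ)) * (m : ℝ) ≤ ⨆ j, idLoad p σ j) := by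
  have hp : IsPoaInstance m p := hp
  have hm₁ : 1 ≤ m := by omega
  refine ⟨⟨blockSchedule hm₁, hp.iSup_idLoad_blockSchedule hm₁⟩, hp.le_iSup_idLoad hm₁,
    fun σ hσ => ?_⟩
  have hcount : (m : ℝ) - 1 ≤ numJobs σ (σ (Fin.last _)) := by
    have := hp.sub_one_le_numJobs_last hm₁ hσ
    rw [← Nat.cast_le (α := ℝ), Nat.cast_sub hm₁, Nat.cast_one] at this
    exact this
  have hm₀ : (m : ℝ) ≠ 0 := by positivity
  calc (2 - 2 / (m : ℝ)) * m = ((m : ℝ) - 1) + ((m : ℝ) - 1) := by field_simp; ring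
    _ ≤ numJobs σ (σ (Fin.last _)) + ((m : ℝ) - 1) := by gcongr
    _ = idLoad p σ (σ (Fin.last _)) := by rw [hp.idLoad_eq, if_pos rfl]
    _ ≤ ⨆ j, idLoad p σ j := idLoad_le_iSup p σ _
end

section
/- In the uniform-machines lower-bound instance with machine groups G_0,...,G_k (group G_j has m_j machines of speed 2^{−j}, m_0 = 1, m_j = Σ_{t<j} m_t·2^{j−t}) and job groups J_0,...,J_k (J_j has 2m_j jobs of length 2^{−j} for j < k, and J_k has 3m_k jobs of length 2^{−k}), the strategy profile σ that places on each machine of group G_j two jobs of length 2^{−j} and, for every j < i ≤ k, 2^{i−j} jobs of length 2^{−i}, gives every job of group J_j cost exactly k − j + 2 under the EQUI policy, and σ is a pure Nash equilibrium. -/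
/-! On a machine of group `g`, the jobs of group `j' > g` contribute `2^(j'-g) · 2^(-j') = 2^(-g)`
to the EQUI sum of a job of group `j ≤ j'`, and all the jobs of groups `≤ j` together contribute
`2^(j-g+1) · 2^(-j) = 2 · 2^(-g)`. Scaled by the speed `2^(-g)`, a job of group `j ≥ g` thus
pays `k - j + 2`. After a job of group `j` moves to a machine of group `g'`, it pays
`2^(g'-j) + (k - max g' j + 2)`, which is at least `k - j + 2` because `2^d ≥ d`. -/

open Finset

/-- The number of jobs of group `j` that the profile puts on a machine of group `g`. -/
def jobsPerMachine (g j : ℕ) : ℕ :=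
  if j < g then 0 else if j = g then 2 else 2 ^ (j - g)

lemma jobsPerMachine_of_lt {g j : ℕ} (h : g < j) : jobsPerMachine g j = 2 ^ (j - g) := by
  simp [jobsPerMachine, h.not_gt, h.ne']

lemma sum_range_jobsPerMachine {g n : ℕ} (hg : g ≤ n) :
    ∑ j ∈ range (n + 1), jobsPerMachine g j = 2 ^ (n - g + 1) := by
  induction n, hg using Nat.le_induction with
  | base =>
    rw [sum_range_succ, sum_eq_zero fun j hj => by simp [jobsPerMachine, mem_range.mp hj]]
    simp [jobsPerMachine]
  | succ n hgn ih =>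
    rw [sum_range_succ, ih, jobsPerMachine_of_lt (by omega), Nat.sub_add_comm hgn,
      pow_succ 2 (n - g + 1)]
    ring

lemma min_half_pow (a b : ℕ) : min ((1 / 2 : ℝ) ^ a) ((1 / 2) ^ b) = (1 / 2) ^ max a b :=
  ((pow_right_anti₀ (by norm_num) (by norm_num)).map_max).symm

lemma two_pow_sub_mul_half_pow {g n : ℕ} (hg : g ≤ n) :
    (2 : ℝ) ^ (n - g) * (1 / 2) ^ n = (1 / 2) ^ g := by
  obtain ⟨d, rfl⟩ := Nat.exists_eq_add_of_le hg
  rw [Nat.add_sub_cancel_left, pow_add, mul_left_comm, ← mul_pow]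
  norm_num

/-- The EQUI sum of a job of group `j` among the jobs of a machine of group `g`. -/
lemma sum_jobsPerMachine_mul_half_pow {g j k : ℕ} (hg : g ≤ k) (hj : j ≤ k) :
    ∑ j' ∈ range (k + 1), (jobsPerMachine g j' : ℝ) * (1 / 2) ^ max j j' =
      (1 / 2) ^ g * ((k : ℝ) - (max g j : ℕ) + 2) := by
  induction k, (max_le hg hj : max g j ≤ k) using Nat.le_induction with
  | base =>
    have hterm : ∀ j' ∈ range (max g j + 1), (jobsPerMachine g j' : ℝ) * (1 / 2) ^ max j j' =
        jobsPerMachine g j' * (1 / 2) ^ max g j := by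
      intro j' hj'
      have hj' := mem_range.mp hj'
      by_cases hlt : j' < g
      · simp [jobsPerMachine, hlt]
      · congr 2; omega
    rw [sum_congr rfl hterm, ← sum_mul, ← Nat.cast_sum,
      sum_range_jobsPerMachine (le_max_left _ _)]
    push_cast
    rw [pow_succ, mul_right_comm, two_pow_sub_mul_half_pow (le_max_left _ _)]
    ring
  | succ n hn ih =>
    rw [sum_range_succ, ih (by omega) (by omega), jobsPerMachine_of_lt (by omega),
      max_eq_right (by omega : j ≤ n + 1), Nat.cast_pow, Nat.cast_ofNat,
      two_pow_sub_mul_half_pow (by omega)]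
    push_cast
    ring

lemma sub_le_inv_half_pow_mul_half_pow (g j : ℕ) :
    ((max g j : ℕ) : ℝ) - j ≤ ((1 / 2 : ℝ) ^ g)⁻¹ * (1 / 2) ^ j := by
  rcases le_total g j with hgj | hjg
  · rw [max_eq_right hgj, sub_self]
    positivity
  · obtain ⟨d, rfl⟩ := Nat.exists_eq_add_of_le hjg
    have hd : (d : ℝ) ≤ 2 ^ d := by exact_mod_cast Nat.lt_two_pow_self.le
    rw [max_eq_left hjg, pow_add, mul_inv, mul_right_comm, inv_mul_cancel₀ (by positivity),
      one_mul]
    push_cast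
    simpa using hd

lemma filter_update_eq_insert {α β : Type*} [Fintype α] [DecidableEq α] [DecidableEq β]
    (f : α → β) (a : α) (b : β) :
    univ.filter (fun a' => Function.update f a b a' = b) = insert a (univ.filter (f · = b)) := by
  ext a'
  by_cases ha : a' = a <;> simp [ha]

section Profile

variable {k : ℕ} {M J : Type} [Fintype J] [DecidableEq M]
  {mg : M → Fin (k + 1)} {jg : J → Fin (k + 1)} {len : J → ℝ} {σ : J → M}

lemma machineGroup_le_jobGroup
    (hσ : ∀ x j, (univ.filter (fun i => σ i = x ∧ jg i = j)).card = jobsPerMachine (mg x) j)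
    (i : J) : (mg (σ i) : ℕ) ≤ jg i := by
  by_contra! h
  have hempty := hσ (σ i) (jg i)
  rw [jobsPerMachine, if_pos h, card_eq_zero] at hempty
  exact notMem_empty i (hempty ▸ by simp)

lemma sum_min_half_pow_len (hlen : ∀ i, len i = (1 / 2 : ℝ) ^ (jg i : ℕ))
    (hσ : ∀ x j, (univ.filter (fun i => σ i = x ∧ jg i = j)).card = jobsPerMachine (mg x) j)
    (x : M) {j : ℕ} (hj : j ≤ k) :
    ∑ i ∈ univ.filter (σ · = x), min ((1 / 2 : ℝ) ^ j) (len i) =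
      (1 / 2) ^ (mg x : ℕ) * ((k : ℝ) - (max (mg x : ℕ) j : ℕ) + 2) := by
  have hfiber : ∀ j' : Fin (k + 1), ∑ i ∈ (univ.filter (σ · = x)).filter (jg · = j'),
      min ((1 / 2 : ℝ) ^ j) (len i) = jobsPerMachine (mg x) j' * (1 / 2) ^ max j (j' : ℕ) := by
    intro j'
    rw [sum_congr rfl fun i hi => by rw [hlen, (mem_filter.mp hi).2, min_half_pow], sum_const,
      filter_filter, hσ, nsmul_eq_mul]
  rw [← sum_fiberwise _ jg, sum_congr rfl fun j' _ => hfiber j',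
    Fin.sum_univ_eq_sum_range (fun j' => (jobsPerMachine (mg x) j' : ℝ) * (1 / 2) ^ max j j'),
    sum_jobsPerMachine_mul_half_pow (mg x).is_le hj]

end Profile

theorem equi_uniform_lower_bound_profile_general
    (k : ℕ) (M J : Type) [DecidableEq M] [Fintype J] [DecidableEq J]
    (mg : M → Fin (k + 1)) (jg : J → Fin (k + 1))
    (len : J → ℝ) (hlen : ∀ i, len i = (1 / 2 : ℝ) ^ (jg i : ℕ))
    (sp : M → ℝ) (hsp : ∀ x, sp x = (1 / 2 : ℝ) ^ (mg x : ℕ))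
    (σ : J → M)
    (hσ : ∀ (x : M) (j : Fin (k + 1)),
      (Finset.univ.filter (fun i : J => σ i = x ∧ jg i = j)).card =
        if j.val < (mg x : ℕ) then 0
        else if j.val = (mg x : ℕ) then 2
        else 2 ^ (j.val - (mg x : ℕ)))
    (cost : (J → M) → J → ℝ)
    (hcost : ∀ (τ : J → M) (i : J), cost τ i =
      (sp (τ i))⁻¹ *
        ∑ i' ∈ Finset.univ.filter (fun i' => τ i' = τ i), min (len i) (len i')) :
    (∀ i : J, cost σ i = (k : ℝ) - (jg i : ℕ) + 2) ∧
    (∀ (i : J) (x : M), cost σ i ≤ cost (Function.update σ i x) i) := by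
  have hcostσ (i : J) : cost σ i = (k : ℝ) - (jg i : ℕ) + 2 := by
    rw [hcost, hsp, hlen i, sum_min_half_pow_len hlen hσ _ (jg i).is_le,
      max_eq_right (machineGroup_le_jobGroup hσ i), inv_mul_cancel_left₀ (by positivity)]
  refine ⟨hcostσ, fun i x => ?_⟩
  rcases eq_or_ne (σ i) x with rfl | hx
  · simp
  have hi : i ∉ univ.filter (σ · = x) := by simpa using hx
  rw [hcostσ, hcost (Function.update σ i x), Function.update_self, filter_update_eq_insert,
    sum_insert hi, hlen i, min_self, sum_min_half_pow_len hlen hσ x (jg i).is_le, hsp, mul_add,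
    inv_mul_cancel_left₀ (by positivity)]
  linarith [sub_le_inv_half_pow_mul_half_pow (mg x : ℕ) (jg i : ℕ)]

/-- the uniform-machines lower-bound instance. Machine groups
`G_0,…,G_k` (group `j` has `mnum j` machines of speed `2^{−j}`, with `mnum 0 = 1` and
`mnum j = Σ_{t<j} mnum t · 2^{j−t}`), job groups `J_0,…,J_k` (`J_j` has `2·mnum j` jobs
of length `2^{−j}` for `j < k`, and `J_k` has `3·mnum k` jobs of length `2^{−k}`). In
the profile `σ` placing on each machine of group `j` two jobs of length `2^{−j}` and,
for every `j < i ≤ k`, `2^{i−j}` jobs of length `2^{−i}`, every job of group `j` has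
EQUI cost exactly `k − j + 2`, and `σ` is a pure Nash equilibrium. -/
theorem equi_uniform_lower_bound_profile
    (k : ℕ) (M J : Type) [Fintype M] [DecidableEq M] [Fintype J] [DecidableEq J]
    (mg : M → Fin (k + 1)) (jg : J → Fin (k + 1)) (mnum : ℕ → ℕ)
    (hm0 : mnum 0 = 1)
    (hmrec : ∀ j : ℕ, 1 ≤ j → j ≤ k →
      mnum j = ∑ t ∈ Finset.range j, mnum t * 2 ^ (j - t))
    (hMcard : ∀ j : Fin (k + 1),
      (Finset.univ.filter (fun x : M => mg x = j)).card = mnum j.val)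
    (hJcard : ∀ j : Fin (k + 1),
      (Finset.univ.filter (fun i : J => jg i = j)).card =
        if j.val = k then 3 * mnum k else 2 * mnum j.val)
    (len : J → ℝ) (hlen : ∀ i, len i = (1 / 2 : ℝ) ^ (jg i : ℕ))
    (sp : M → ℝ) (hsp : ∀ x, sp x = (1 / 2 : ℝ) ^ (mg x : ℕ))
    (σ : J → M)
    (hσ : ∀ (x : M) (j : Fin (k + 1)),
      (Finset.univ.filter (fun i : J => σ i = x ∧ jg i = j)).card =
        if j.val < (mg x : ℕ) then 0
        else if j.val = (mg x : ℕ) then 2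
        else 2 ^ (j.val - (mg x : ℕ)))
    (cost : (J → M) → J → ℝ)
    (hcost : ∀ (τ : J → M) (i : J), cost τ i =
      (sp (τ i))⁻¹ *
        ∑ i' ∈ Finset.univ.filter (fun i' => τ i' = τ i), min (len i) (len i')) :
    (∀ i : J, cost σ i = (k : ℝ) - (jg i : ℕ) + 2) ∧
    (∀ (i : J) (x : M), cost σ i ≤ cost (Function.update σ i x) i) :=
  equi_uniform_lower_bound_profile_general k M J mg jg len hlen sp hsp σ hσ cost hcost
end

section
/- On m unrelated machines under the EQUI policy, in any pure Nash equilibrium, the cost c_i of the i-th job (jobs ordered so that q_1 ≤ q_2 ≤ ... ≤ q_n, where q_i = min_j p_{i,j}) satisfies c_i ≤ 2q_1 + 2q_2 + ... + 2q_{i−1} + (n − i + 1)q_i. -/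
/-- On unrelated machines, in any pure Nash equilibrium under EQUI,
with `q_i = min_j p_{i,j}` and jobs ordered so that `q_1 ≤ … ≤ q_n`, the cost of the
`i`-th job satisfies `c_i ≤ 2 q_1 + … + 2 q_{i−1} + (n − i + 1) q_i`. -/
theorem equi_unrelated_cost_bound
    {n m : ℕ} (p : Fin n → Fin m → ℝ) (hp : ∀ i j, 0 < p i j)
    (q : Fin n → ℝ)
    (hq_le : ∀ (i : Fin n) (j : Fin m), q i ≤ p i j)
    (hq_mem : ∀ i : Fin n, ∃ j : Fin m, p i j = q i)
    (hmono : ∀ i i' : Fin n, i ≤ i' → q i ≤ q i')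
    (σ : Fin n → Fin m) (hNE : equiNE p σ) :
    ∀ i : Fin n,
      equiCost p σ i ≤
        2 * (∑ t ∈ Finset.univ.filter (fun t => t < i), q t) +
          ((n : ℝ) - i.val) * q i := by
  have hq_pos : ∀ t : Fin n, 0 < q t := by
    intro t
    obtain ⟨j, hj⟩ := hq_mem t
    exact hj ▸ hp t j
  have key : ∀ N : ℕ, ∀ i : Fin n, i.val < N →
      equiCost p σ i ≤
        2 * (∑ t ∈ Finset.univ.filter (fun t => t < i), q t) +
          ((n : ℝ) - i.val) * q i := by
    intro N
    induction N with
    | zero => intro i h; omega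
    | succ N ih =>
      intro i hiN
      obtain ⟨j, hj⟩ := hq_mem i
      have hdev := hNE i j
      have hσ'i : Function.update σ i j i = j := Function.update_self i j σ
      set S : Finset (Fin n) := Finset.univ.filter (fun l => l ≠ i ∧ σ l = j) with hS
      have hiS : i ∉ S := by simp [hS]
      have hF : Finset.univ.filter (fun l => Function.update σ i j l = Function.update σ i j i)
          = insert i S := by
        ext l
        simp only [Finset.mem_filter, Finset.mem_univ, true_and, Finset.mem_insert, hσ'i, hS]
        by_cases h : l = i
        · subst h; simp
        · simp [Function.update_of_ne h, h]
      have hdev' : equiCost p (Function.update σ i j) i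
          = p i j + ∑ l ∈ S, min (p i j) (p l j) := by
        unfold equiCost
        rw [hF, Finset.sum_insert hiS, hσ'i, min_self]
      rw [hdev'] at hdev
      -- split S into low-index part A and high-index part B
      set A : Finset (Fin n) := S.filter (fun l => l < i) with hA
      set B : Finset (Fin n) := S.filter (fun l => ¬ l < i) with hB
      have hs1 : (∑ l ∈ A, min (p i j) (p l j)) + (∑ l ∈ B, min (p i j) (p l j))
          = ∑ l ∈ S, min (p i j) (p l j) :=
        Finset.sum_filter_add_sum_filter_not S _ _
      have hBsub : B ⊆ Finset.Ioi i := by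
        intro l hl
        simp only [hB, hS, Finset.mem_filter, Finset.mem_univ, true_and] at hl
        exact Finset.mem_Ioi.2 (lt_of_le_of_ne (not_lt.1 hl.2) (Ne.symm hl.1.1))
      have hin : (i.val : ℝ) + 1 ≤ (n : ℝ) := by exact_mod_cast i.isLt
      have hBcard : (B.card : ℝ) ≤ (n : ℝ) - 1 - i.val := by
        have h1 : B.card ≤ n - 1 - i.val := by
          have h2 := Finset.card_le_card hBsub
          rwa [Fin.card_Ioi] at h2
        have h3 : (B.card : ℝ) ≤ ((n - 1 - i.val : ℕ) : ℝ) := by exact_mod_cast h1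
        have h4 : ((n - 1 - i.val : ℕ) : ℝ) = (n : ℝ) - 1 - i.val := by
          have h5 : i.val < n := i.isLt
          have h6 : n - 1 - i.val = n - (1 + i.val) := by omega
          rw [h6, Nat.cast_sub (by omega)]
          push_cast
          ring
        linarith
      have hqi : 0 < q i := hq_pos i
      have hΦnn : (0:ℝ) ≤ ∑ t ∈ Finset.univ.filter (fun t => t < i), q t :=
        Finset.sum_nonneg fun t _ => (hq_pos t).le
      rcases Finset.eq_empty_or_nonempty A with hAe | hAne
      · -- no lower-index job on machine j
        have hSsub : S ⊆ Finset.Ioi i := by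
          intro l hl
          have hlA : l ∉ A := by rw [hAe]; exact Finset.notMem_empty l
          have h1 : ¬ l < i := fun h => hlA (Finset.mem_filter.2 ⟨hl, h⟩)
          have h2 : l ≠ i := ((Finset.mem_filter.1 hl).2).1
          exact Finset.mem_Ioi.2 (lt_of_le_of_ne (not_lt.1 h1) h2.symm)
        have hScard : (S.card : ℝ) ≤ (n : ℝ) - 1 - i.val := by
          have h1 : S.card ≤ n - 1 - i.val := by
            have h2 := Finset.card_le_card hSsub
            rwa [Fin.card_Ioi] at h2
          have h3 : (S.card : ℝ) ≤ ((n - 1 - i.val : ℕ) : ℝ) := by exact_mod_cast h1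
          have h4 : ((n - 1 - i.val : ℕ) : ℝ) = (n : ℝ) - 1 - i.val := by
            have h6 : n - 1 - i.val = n - (1 + i.val) := by omega
            rw [h6, Nat.cast_sub (by omega)]
            push_cast
            ring
          linarith
        have hsum : ∑ l ∈ S, min (p i j) (p l j) ≤ (S.card : ℝ) * p i j := by
          calc ∑ l ∈ S, min (p i j) (p l j) ≤ ∑ _l ∈ S, p i j :=
                Finset.sum_le_sum fun l _ => min_le_left _ _
          _ = (S.card : ℝ) * p i j := by rw [Finset.sum_const, nsmul_eq_mul]
        have hmul : (S.card : ℝ) * p i j ≤ ((n : ℝ) - 1 - i.val) * q i := by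
          rw [hj]
          exact mul_le_mul_of_nonneg_right hScard hqi.le
        nlinarith [hdev, hsum, hmul, hΦnn, hj, hqi]
      · -- pick the job k < i on machine j with maximal processing time there
        obtain ⟨k, hkA, hkmax⟩ := Finset.exists_max_image A (fun l => p l j) hAne
        have hkS : k ∈ S := (Finset.mem_filter.1 hkA).1
        have hki : k < i := (Finset.mem_filter.1 hkA).2
        have hkj : σ k = j := ((Finset.mem_filter.1 hkS).2).2
        have hki' : k.val < i.val := hki
        have hkqi : q k ≤ q i := hmono k i hki.le
        have hkq : 0 < q k := hq_pos k
        have hIH : equiCost p σ k ≤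
            2 * (∑ t ∈ Finset.univ.filter (fun t => t < k), q t) +
              ((n : ℝ) - k.val) * q k := by
          apply ih k
          omega
        set μ := min (p i j) (p k j) with hμ
        have hμ1 : q k ≤ μ := le_min (by rw [hj]; exact hkqi) (hq_le k j)
        have hμ2 : μ ≤ p i j := min_le_left _ _
        have h3 : ∑ l ∈ A, min (p i j) (p l j) ≤ ∑ l ∈ A, min (p k j) (p l j) :=
          Finset.sum_le_sum fun l hl =>
            le_min ((min_le_right _ _).trans (hkmax l hl)) (min_le_right _ _)
        have h4 : ∑ l ∈ B, min (p i j) (p l j)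
            ≤ ∑ l ∈ B, min (p k j) (p l j) + (B.card : ℝ) * (p i j - μ) := by
          have hterm : ∀ l ∈ B, min (p i j) (p l j) ≤ min (p k j) (p l j) + (p i j - μ) := by
            intro l _
            rcases le_total (p l j) (p k j) with h | h
            · rw [min_eq_right h]
              have h5 := min_le_right (p i j) (p l j)
              linarith
            · rw [min_eq_left h]
              have h5 := min_le_left (p i j) (p l j)
              have h6 : μ ≤ p k j := min_le_right _ _
              linarith
          calc ∑ l ∈ B, min (p i j) (p l j)
              ≤ ∑ l ∈ B, (min (p k j) (p l j) + (p i j - μ)) := Finset.sum_le_sum hterm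
          _ = ∑ l ∈ B, min (p k j) (p l j) + (B.card : ℝ) * (p i j - μ) := by
              rw [Finset.sum_add_distrib, Finset.sum_const, nsmul_eq_mul]
        have hs2 : (∑ l ∈ A, min (p k j) (p l j)) + (∑ l ∈ B, min (p k j) (p l j))
            = ∑ l ∈ S, min (p k j) (p l j) :=
          Finset.sum_filter_add_sum_filter_not S _ _
        have h6 : ∑ l ∈ S, min (p k j) (p l j) ≤ equiCost p σ k := by
          unfold equiCost
          rw [hkj]
          apply Finset.sum_le_sum_of_subset_of_nonneg
          · intro l hl
            simp only [hS, Finset.mem_filter, Finset.mem_univ, true_and] at hl ⊢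
            exact hl.2
          · intro l _ _
            exact le_of_lt (lt_min (hp _ _) (hp _ _))
        have h8 : (B.card : ℝ) * (p i j - μ) ≤ ((n : ℝ) - 1 - i.val) * (q i - q k) := by
          apply mul_le_mul hBcard (by linarith) (by linarith) (by linarith)
        have hIco : (Finset.univ.filter (fun t => t < i)).filter (fun t => ¬ t < k)
            = Finset.Ico k i := by
          ext t
          simp only [Finset.mem_filter, Finset.mem_univ, true_and, Finset.mem_Ico, not_lt]
          tauto
        have hIio : (Finset.univ.filter (fun t => t < i)).filter (fun t => t < k)
            = Finset.univ.filter (fun t => t < k) := by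
          ext t
          simp only [Finset.mem_filter, Finset.mem_univ, true_and]
          exact ⟨fun h => h.2, fun h => ⟨h.trans hki, h⟩⟩
        have hΦsplit : (∑ t ∈ Finset.univ.filter (fun t => t < k), q t)
            + (∑ t ∈ Finset.Ico k i, q t)
            = ∑ t ∈ Finset.univ.filter (fun t => t < i), q t := by
          rw [← hIio, ← hIco]
          exact Finset.sum_filter_add_sum_filter_not _ _ _
        have hIcoSum : ((i.val : ℝ) - k.val) * q k ≤ ∑ t ∈ Finset.Ico k i, q t := by
          have h1 : (Finset.Ico k i).card • q k ≤ ∑ t ∈ Finset.Ico k i, q t :=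
            Finset.card_nsmul_le_sum _ _ _ (fun t ht => hmono k t (Finset.mem_Ico.1 ht).1)
          rw [Fin.card_Ico, nsmul_eq_mul] at h1
          have h2 : ((i.val - k.val : ℕ) : ℝ) = (i.val : ℝ) - k.val := by
            rw [Nat.cast_sub (le_of_lt hki')]
          linarith [h1, h2 ▸ h1]
        have ha : (k.val : ℝ) + 1 ≤ (i.val : ℝ) := by exact_mod_cast hki'
        have hprod : (0:ℝ) ≤ ((i.val : ℝ) - k.val - 1) * q k :=
          mul_nonneg (by linarith) hkq.le
        have step1 : equiCost p σ i ≤ p i j + (∑ l ∈ S, min (p k j) (p l j))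
            + (B.card : ℝ) * (p i j - μ) := by linarith [hdev, hs1, hs2, h3, h4]
        have step2 : equiCost p σ i ≤ p i j + equiCost p σ k
            + ((n : ℝ) - 1 - i.val) * (q i - q k) := by linarith [h6, h8]
        have step3 : equiCost p σ i ≤ q i
            + (2 * (∑ t ∈ Finset.univ.filter (fun t => t < k), q t) + ((n : ℝ) - k.val) * q k)
            + ((n : ℝ) - 1 - i.val) * (q i - q k) := by
          rw [hj] at step2; linarith [hIH]
        linarith [step3, hΦsplit, hIcoSum, hprod, ha, hin, hkq.le, hkqi]
  intro i
  exact key n i i.isLt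
end

section
/- On m unrelated machines, the price of anarchy of the EQUI policy is at most 2m: the makespan of any pure Nash equilibrium is at most 2m times the optimal makespan. -/
/-- Load of machine `j` under profile `σ` (unrelated machines). -/
def urLoad {n m : ℕ} (p : Fin n → Fin m → ℝ) (σ : Fin n → Fin m) (j : Fin m) : ℝ :=
  ∑ i ∈ Finset.univ.filter (fun i => σ i = j), p i j

open Finset

lemma equi_dev {n m : ℕ} (p : Fin n → Fin m → ℝ) (σ : Fin n → Fin m)
    (i : Fin n) (j : Fin m) :
    equiCost p (Function.update σ i j) i
      = p i j + ∑ w ∈ Finset.univ.filter (fun w => σ w = j ∧ w ≠ i),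
          min (p i j) (p w (σ w)) := by
  unfold equiCost
  have hji : Function.update σ i j i = j := Function.update_self i j σ
  have hset : Finset.univ.filter (fun w => Function.update σ i j w = Function.update σ i j i)
      = insert i (Finset.univ.filter (fun w => σ w = j ∧ w ≠ i)) := by
    ext w
    rcases eq_or_ne w i with h | h
    · simp [h, hji]
    · simp [h, Function.update_apply, hji]
  rw [hset, Finset.sum_insert (by simp)]
  rw [hji, min_self]
  congr 1
  refine Finset.sum_congr rfl (fun w hw => ?_)
  have hwj : σ w = j := (Finset.mem_filter.mp hw).2.1
  rw [hwj]

lemma equi_cost_eq {n m : ℕ} (p : Fin n → Fin m → ℝ) (σ : Fin n → Fin m) (v : Fin n) :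
    equiCost p σ v
      = ∑ w ∈ Finset.univ.filter (fun w => σ w = σ v), min (p v (σ v)) (p w (σ w)) := by
  unfold equiCost
  refine Finset.sum_congr rfl (fun w hw => ?_)
  have hwj : σ w = σ v := (Finset.mem_filter.mp hw).2
  rw [hwj]

/-- Key lemma: in an EQUI Nash equilibrium,
`c_i ≤ q_i + ∑_{k ≠ i} min (q_i) (2 q_k)` where `q_k = min_j p k j = p k (b k)`. -/
lemma equiP3 {n m : ℕ} (p : Fin n → Fin m → ℝ) (hp : ∀ i j, 0 < p i j)
    (σ : Fin n → Fin m) (hNE : equiNE p σ) (b : Fin n → Fin m)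
    (hb : ∀ i j, p i (b i) ≤ p i j) (N : ℕ) :
    ∀ i : Fin n, (Finset.univ.filter (fun k => p k (b k) < p i (b i))).card ≤ N →
      equiCost p σ i ≤ p i (b i) + ∑ k ∈ Finset.univ.erase i, min (p i (b i)) (2 * p k (b k)) := by
  induction N using Nat.strong_induction_on with
  | _ N IH =>
  intro i hN
  classical
  set C : Finset (Fin n) := Finset.univ.filter (fun w => σ w = b i ∧ w ≠ i) with hCdef
  set B : Finset (Fin n) := C.filter (fun w => p i (b i) ≤ 2 * p w (b w)) with hBdef
  set S : Finset (Fin n) := C.filter (fun w => ¬ (p i (b i) ≤ 2 * p w (b w))) with hSdef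
  have hdev : equiCost p σ i
      ≤ p i (b i) + ((∑ w ∈ B, min (p i (b i)) (p w (σ w)))
          + (∑ w ∈ S, min (p i (b i)) (p w (σ w)))) := by
    have h0 := hNE i (b i)
    rw [equi_dev p σ i (b i)] at h0
    have hsplit : (∑ w ∈ B, min (p i (b i)) (p w (σ w)))
        + (∑ w ∈ S, min (p i (b i)) (p w (σ w)))
        = ∑ w ∈ C, min (p i (b i)) (p w (σ w)) :=
      Finset.sum_filter_add_sum_filter_not C (fun w => p i (b i) ≤ 2 * p w (b w)) _
    rw [hsplit]
    exact h0
  -- nonnegativity of budget terms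
  have hbudget_nonneg : ∀ k ∈ (Finset.univ.erase i : Finset (Fin n)),
      (0:ℝ) ≤ min (p i (b i)) (2 * p k (b k)) := fun k _ =>
    le_min (hp i (b i)).le (by linarith [hp k (b k)])
  have hBsub_erasei : B ⊆ Finset.univ.erase i := by
    intro w hw
    have hwC : w ∈ C := Finset.mem_filter.mp hw |>.1
    have : w ≠ i := (Finset.mem_filter.mp hwC).2.2
    exact Finset.mem_erase.mpr ⟨this, Finset.mem_univ w⟩
  by_cases hS : S.Nonempty
  · -- main case
    obtain ⟨v, hvS, hvmax⟩ := Finset.exists_max_image S (fun w => p w (σ w)) hS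
    have hvC : v ∈ C := (Finset.mem_filter.mp hvS).1
    have hv2 : 2 * p v (b v) < p i (b i) := not_le.mp (Finset.mem_filter.mp hvS).2
    have hσv : σ v = b i := (Finset.mem_filter.mp hvC).2.1
    have hvne : v ≠ i := (Finset.mem_filter.mp hvC).2.2
    have hQv_pos : 0 < p v (b v) := hp v (b v)
    have hQvXv : p v (b v) ≤ p v (σ v) := hb v (σ v)
    have hQvQi : p v (b v) < p i (b i) := by linarith
    -- induction hypothesis at v
    have hcard : (Finset.univ.filter (fun k => p k (b k) < p v (b v))).card
        < (Finset.univ.filter (fun k => p k (b k) < p i (b i))).card := by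
      apply Finset.card_lt_card
      rw [Finset.ssubset_def]
      constructor
      · intro k hk
        have : p k (b k) < p v (b v) := (Finset.mem_filter.mp hk).2
        exact Finset.mem_filter.mpr ⟨Finset.mem_univ k, lt_trans this hQvQi⟩
      · intro hcon
        have hvin : v ∈ Finset.univ.filter (fun k => p k (b k) < p i (b i)) :=
          Finset.mem_filter.mpr ⟨Finset.mem_univ v, hQvQi⟩
        have := (Finset.mem_filter.mp (hcon hvin)).2
        exact lt_irrefl _ this
    have hIH := IH _ (lt_of_lt_of_le hcard hN) v le_rfl
    -- cost of v
    have hcv_eq : equiCost p σ v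
        = ∑ w ∈ Finset.univ.filter (fun w => σ w = b i), min (p v (σ v)) (p w (σ w)) := by
      rw [equi_cost_eq, hσv]
    have hdisjSB : Disjoint S B := by
      rw [hSdef, hBdef]
      exact (Finset.disjoint_filter_filter_not C C (fun w => p i (b i) ≤ 2 * p w (b w))).symm
    have hsumSB : (∑ w ∈ S, min (p v (σ v)) (p w (σ w)))
        + (∑ w ∈ B, min (p v (σ v)) (p w (σ w))) ≤ equiCost p σ v := by
      rw [hcv_eq, ← Finset.sum_union hdisjSB]
      apply Finset.sum_le_sum_of_subset_of_nonneg
      · intro w hw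
        have hwC : w ∈ C := by
          rcases Finset.mem_union.mp hw with h | h
          · exact (Finset.mem_filter.mp h).1
          · exact (Finset.mem_filter.mp h).1
        exact Finset.mem_filter.mpr ⟨Finset.mem_univ w, (Finset.mem_filter.mp hwC).2.1⟩
      · intro k _ _
        exact le_min (hp _ _).le (hp _ _).le
    have hSsum : ∑ w ∈ S, min (p i (b i)) (p w (σ w))
        ≤ ∑ w ∈ S, min (p v (σ v)) (p w (σ w)) := by
      refine Finset.sum_le_sum (fun w hw => ?_)
      have hXw : p w (σ w) ≤ p v (σ v) := hvmax w hw
      calc min (p i (b i)) (p w (σ w)) ≤ p w (σ w) := min_le_right _ _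
        _ = min (p v (σ v)) (p w (σ w)) := (min_eq_right hXw).symm
    have hBsum : ∑ w ∈ B, min (p i (b i)) (p w (σ w))
        ≤ (∑ w ∈ B, min (p v (σ v)) (p w (σ w)))
          + ((B.card : ℝ) * p i (b i) - (B.card : ℝ) * p v (b v)) := by
      have hterm : ∀ w ∈ B, min (p i (b i)) (p w (σ w))
          ≤ min (p v (σ v)) (p w (σ w)) + (p i (b i) - p v (b v)) := by
        intro w hw
        have hwP : p i (b i) ≤ 2 * p w (b w) := (Finset.mem_filter.mp hw).2
        have h1 : p v (b v) ≤ p w (b w) := by linarith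
        have h2 : p v (b v) ≤ min (p v (σ v)) (p w (σ w)) :=
          le_min hQvXv (le_trans h1 (hb w (σ w)))
        have h3 := min_le_left (p i (b i)) (p w (σ w))
        linarith
      calc ∑ w ∈ B, min (p i (b i)) (p w (σ w))
          ≤ ∑ w ∈ B, (min (p v (σ v)) (p w (σ w)) + (p i (b i) - p v (b v))) :=
            Finset.sum_le_sum hterm
        _ = (∑ w ∈ B, min (p v (σ v)) (p w (σ w)))
            + ((B.card : ℝ) * p i (b i) - (B.card : ℝ) * p v (b v)) := by
            rw [Finset.sum_add_distrib, Finset.sum_const, nsmul_eq_mul]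
            ring
    -- split the IH budget
    have hvnotB : v ∉ B := Finset.disjoint_left.mp hdisjSB hvS
    have hBsub_erasev : B ⊆ Finset.univ.erase v := by
      intro w hw
      refine Finset.mem_erase.mpr ⟨?_, Finset.mem_univ w⟩
      rintro rfl; exact hvnotB hw
    have hIH2 : equiCost p σ v ≤ p v (b v)
        + ((∑ k ∈ (Finset.univ.erase v) \ B, min (p v (b v)) (2 * p k (b k)))
           + (∑ k ∈ B, min (p v (b v)) (2 * p k (b k)))) := by
      rw [Finset.sum_sdiff hBsub_erasev]
      exact hIH
    have hBv : ∑ k ∈ B, min (p v (b v)) (2 * p k (b k)) ≤ (B.card : ℝ) * p v (b v) := by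
      calc ∑ k ∈ B, min (p v (b v)) (2 * p k (b k)) ≤ ∑ _k ∈ B, p v (b v) :=
            Finset.sum_le_sum (fun k _ => min_le_left _ _)
        _ = (B.card : ℝ) * p v (b v) := by rw [Finset.sum_const, nsmul_eq_mul]
    have hinotB : i ∉ B := by
      intro hiB
      have hiC : i ∈ C := (Finset.mem_filter.mp hiB).1
      exact (Finset.mem_filter.mp hiC).2.2 rfl
    have hiMem : i ∈ (Finset.univ.erase v) \ B :=
      Finset.mem_sdiff.mpr ⟨Finset.mem_erase.mpr ⟨(Ne.symm hvne), Finset.mem_univ i⟩, hinotB⟩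
    have hsplit_i : ∑ k ∈ (Finset.univ.erase v) \ B, min (p v (b v)) (2 * p k (b k))
        = min (p v (b v)) (2 * p i (b i))
          + ∑ k ∈ ((Finset.univ.erase v) \ B).erase i, min (p v (b v)) (2 * p k (b k)) :=
      (Finset.add_sum_erase _ _ hiMem).symm
    have h_i_term : min (p v (b v)) (2 * p i (b i)) ≤ p v (b v) := min_le_left _ _
    set R : Finset (Fin n) := ((Finset.univ.erase v) \ B).erase i with hRdef
    have hrest : ∑ k ∈ R, min (p v (b v)) (2 * p k (b k))
        ≤ ∑ k ∈ R, min (p i (b i)) (2 * p k (b k)) :=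
      Finset.sum_le_sum (fun k _ => min_le_min hQvQi.le le_rfl)
    -- lower bound on the final budget
    have hvnotR : v ∉ R := by
      intro hvR
      have := Finset.mem_sdiff.mp (Finset.mem_of_mem_erase hvR)
      exact (Finset.mem_erase.mp this.1).1 rfl
    have hdisjB_ins : Disjoint B (insert v R) := by
      rw [Finset.disjoint_left]
      intro a haB hains
      rcases Finset.mem_insert.mp hains with rfl | haR
      · exact hvnotB haB
      · exact (Finset.mem_sdiff.mp (Finset.mem_of_mem_erase haR)).2 haB
    have hRHS : (∑ k ∈ B, min (p i (b i)) (2 * p k (b k)))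
        + (min (p i (b i)) (2 * p v (b v)) + ∑ k ∈ R, min (p i (b i)) (2 * p k (b k)))
        ≤ ∑ k ∈ Finset.univ.erase i, min (p i (b i)) (2 * p k (b k)) := by
      have hunion : (∑ k ∈ B, min (p i (b i)) (2 * p k (b k)))
          + (min (p i (b i)) (2 * p v (b v))
            + ∑ k ∈ R, min (p i (b i)) (2 * p k (b k)))
          = ∑ k ∈ B ∪ insert v R, min (p i (b i)) (2 * p k (b k)) := by
        rw [Finset.sum_union hdisjB_ins, Finset.sum_insert hvnotR]
      rw [hunion]
      apply Finset.sum_le_sum_of_subset_of_nonneg _ (fun k hk _ => hbudget_nonneg k hk)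
      intro a ha
      rcases Finset.mem_union.mp ha with h | h
      · exact hBsub_erasei h
      · rcases Finset.mem_insert.mp h with rfl | haR
        · exact Finset.mem_erase.mpr ⟨hvne, Finset.mem_univ a⟩
        · exact Finset.mem_erase.mpr ⟨(Finset.mem_erase.mp haR).1, Finset.mem_univ a⟩
    have hBQi : ∑ k ∈ B, min (p i (b i)) (2 * p k (b k)) = (B.card : ℝ) * p i (b i) := by
      rw [Finset.sum_congr rfl (fun w hw => min_eq_left (Finset.mem_filter.mp hw).2),
        Finset.sum_const, nsmul_eq_mul]
    have hvterm : min (p i (b i)) (2 * p v (b v)) = 2 * p v (b v) := min_eq_right hv2.le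
    linarith [hdev, hSsum, hsumSB, hBsum, hIH2, hBv, hsplit_i, h_i_term, hrest, hRHS, hBQi,
      hvterm]
  · -- S empty
    have hSempty : S = ∅ := Finset.not_nonempty_iff_eq_empty.mp hS
    have hBsum : ∑ w ∈ B, min (p i (b i)) (p w (σ w))
        ≤ ∑ k ∈ Finset.univ.erase i, min (p i (b i)) (2 * p k (b k)) := by
      calc ∑ w ∈ B, min (p i (b i)) (p w (σ w))
          ≤ ∑ w ∈ B, min (p i (b i)) (2 * p w (b w)) := by
            refine Finset.sum_le_sum (fun w hw => ?_)
            have hwP : p i (b i) ≤ 2 * p w (b w) := (Finset.mem_filter.mp hw).2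
            calc min (p i (b i)) (p w (σ w)) ≤ p i (b i) := min_le_left _ _
              _ = min (p i (b i)) (2 * p w (b w)) := (min_eq_left hwP).symm
        _ ≤ ∑ k ∈ Finset.univ.erase i, min (p i (b i)) (2 * p k (b k)) :=
            Finset.sum_le_sum_of_subset_of_nonneg hBsub_erasei
              (fun k hk _ => hbudget_nonneg k hk)
    rw [hSempty, Finset.sum_empty] at hdev
    linarith [hdev, hBsum]

/-- On `m` unrelated machines, the price of anarchy of EQUI is at most
`2m`: the makespan of any pure Nash equilibrium is at most `2m` times the makespan of
any schedule, in particular of the optimal one. -/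
theorem equi_unrelated_poa_upper
    {n m : ℕ} (hm : 0 < m) (p : Fin n → Fin m → ℝ) (hp : ∀ i j, 0 < p i j)
    (σ : Fin n → Fin m) (hNE : equiNE p σ) :
    ∀ τ : Fin n → Fin m,
      (⨆ j, urLoad p σ j) ≤ 2 * (m : ℝ) * ⨆ j, urLoad p τ j := by
  intro τ
  classical
  have hFm : Nonempty (Fin m) := ⟨⟨0, hm⟩⟩
  -- choose a best machine for each job
  have hbex : ∀ i : Fin n, ∃ bi : Fin m, ∀ j : Fin m, p i bi ≤ p i j := by
    intro i
    obtain ⟨bi, _, hbi⟩ := Finset.exists_min_image Finset.univ (p i)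
      (Finset.univ_nonempty (α := Fin m))
    exact ⟨bi, fun j => hbi j (Finset.mem_univ j)⟩
  choose b hb using hbex
  set W : ℝ := ∑ k : Fin n, p k (b k) with hW
  -- every load in σ is at most 2W
  have load_le : ∀ j : Fin m, urLoad p σ j ≤ 2 * W := by
    intro j
    have hWnonneg : 0 ≤ W := Finset.sum_nonneg (fun k _ => (hp k (b k)).le)
    set D : Finset (Fin n) := Finset.univ.filter (fun w => σ w = j) with hD
    rcases D.eq_empty_or_nonempty with hDe | hDne
    · have : urLoad p σ j = 0 := by
        rw [urLoad, ← hD, hDe, Finset.sum_empty]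
      rw [this]; linarith
    · obtain ⟨v, hvD, hvmax⟩ := Finset.exists_max_image D (fun w => p w (σ w)) hDne
      have hσv : σ v = j := (Finset.mem_filter.mp hvD).2
      have hload_eq : urLoad p σ j = equiCost p σ v := by
        rw [urLoad, equi_cost_eq, hσv]
        refine Finset.sum_congr rfl (fun w hw => ?_)
        have hwj : σ w = j := (Finset.mem_filter.mp hw).2
        have hXw : p w (σ w) ≤ p v (σ v) := hvmax w hw
        rw [hσv, hwj] at hXw
        rw [hwj]
        exact (min_eq_right hXw).symm
      have hP3 := equiP3 p hp σ hNE b hb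
        (Finset.univ.filter (fun k => p k (b k) < p v (b v))).card v le_rfl
      have hsum2 : ∑ k ∈ Finset.univ.erase v, min (p v (b v)) (2 * p k (b k))
          ≤ ∑ k ∈ Finset.univ.erase v, 2 * p k (b k) :=
        Finset.sum_le_sum (fun k _ => min_le_right _ _)
      have herase : p v (b v) + ∑ k ∈ Finset.univ.erase v, p k (b k) = W := by
        rw [hW]
        exact Finset.add_sum_erase Finset.univ (fun k => p k (b k)) (Finset.mem_univ v)
      have hsum3 : ∑ k ∈ Finset.univ.erase v, 2 * p k (b k)
          = 2 * ∑ k ∈ Finset.univ.erase v, p k (b k) := by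
        rw [Finset.mul_sum]
      have hqv : 0 < p v (b v) := hp v (b v)
      rw [hload_eq]
      calc equiCost p σ v
          ≤ p v (b v) + ∑ k ∈ Finset.univ.erase v, min (p v (b v)) (2 * p k (b k)) := hP3
        _ ≤ p v (b v) + 2 * ∑ k ∈ Finset.univ.erase v, p k (b k) := by
            rw [← hsum3]; linarith [hsum2]
        _ ≤ 2 * W := by linarith
  -- W ≤ m * makespan(τ)
  set T : ℝ := ⨆ j, urLoad p τ j with hT
  have hloadτ_le : ∀ j : Fin m, urLoad p τ j ≤ T := by
    intro j
    exact le_ciSup (Set.finite_range (fun j => urLoad p τ j)).bddAbove j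
  have hWT : W ≤ (m : ℝ) * T := by
    have h1 : W ≤ ∑ k : Fin n, p k (τ k) :=
      Finset.sum_le_sum (fun k _ => hb k (τ k))
    have h2 : ∑ k : Fin n, p k (τ k) = ∑ j : Fin m, urLoad p τ j := by
      have h3 : ∀ j : Fin m, urLoad p τ j
          = ∑ k : Fin n, (if τ k = j then p k j else 0) := by
        intro j
        rw [urLoad, Finset.sum_filter]
      rw [Finset.sum_congr rfl (fun j _ => h3 j), Finset.sum_comm]
      refine Finset.sum_congr rfl (fun k _ => ?_)
      rw [Finset.sum_ite_eq Finset.univ (τ k) (fun j => p k j)]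
      simp
    have h4 : ∑ j : Fin m, urLoad p τ j ≤ ∑ _j : Fin m, T :=
      Finset.sum_le_sum (fun j _ => hloadτ_le j)
    have h5 : ∑ _j : Fin m, T = (m : ℝ) * T := by
      rw [Finset.sum_const, Finset.card_univ, Fintype.card_fin, nsmul_eq_mul]
    linarith
  have hfinal : (⨆ j, urLoad p σ j) ≤ 2 * W := ciSup_le load_le
  calc (⨆ j, urLoad p σ j) ≤ 2 * W := hfinal
    _ ≤ 2 * ((m : ℝ) * T) := by linarith
    _ = 2 * (m : ℝ) * T := by ring
end

section
/- The (strong) price of anarchy of the EQUI policy on m unrelated machines is at least (m+1)/4: there is an instance with m machines and job groups J_1,...,J_m (group J_j, j < m, has n_j = 2(m−1)!/(j−1)! jobs schedulable only on machines j and j+1, with processing times p_{j,j} = (j−1)!/(m−1)! and p_{j,j+1} = j!/(2(m−1)!); J_m has one job with p_{m,m} = 1) whose optimal makespan is at most 2, and the profile splitting each group J_j (j < m) evenly between machines j and j+1 (with J_m on machine m) is a strong Nash equilibrium with makespan (m+1)/2. -/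
/-!
In the balanced profile machine `k` (0-based) carries load `(k + 2) / 2` and every job of group
`j` pays `(j + 2) / 2`, because `(m-1)!/j! · j!/(m-1)! = 1` and `(m-1)!/j! · (j+1)!/(m-1)! = j + 1`.
Against an improving coalition, a downward induction over the machines shows that no machine
loses home jobs: a deficit on machine `k` pushes an extra group-`k` job onto machine `k + 1`,
which gains only if machine `k + 1` has a deficit too, and the last machine cannot have one.
A coalition member of minimal group `j` sees the same guests on machine `j` as before; staying
home it gains only if machine `j` loses home jobs, and leaving it gains only if fewer group-`j`
jobs leave, in which case another member of group `j` moved home.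
-/

open Finset
open scoped Nat

namespace EquiSpoa

variable {n m : ℕ}

-- The paper's `n_{j+1} / 2`: groups and machines are numbered from `0` here.
def halfSize (m j : ℕ) : ℕ := (m - 1)! / j !

noncomputable def homeTime (m : ℕ) (k : Fin m) : ℝ := (k.val ! : ℝ) / (m - 1)!

lemma homeTime_pos (k : Fin m) : 0 < homeTime m k := by
  unfold homeTime; positivity

lemma halfSize_last : halfSize m (m - 1) = 1 :=
  Nat.div_self (Nat.factorial_pos _)

lemma cast_halfSize (k : Fin m) : (halfSize m k : ℝ) = (m - 1)! / k.val ! := by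
  rw [halfSize, Nat.cast_div (Nat.factorial_dvd_factorial (by omega)) (by positivity)]

lemma halfSize_mul_homeTime (k : Fin m) : (halfSize m k : ℝ) * homeTime m k = 1 := by
  rw [cast_halfSize, homeTime]
  field_simp

lemma halfSize_mul_homeTime_of_succ {j k : Fin m} (h : k.val = j.val + 1) :
    (halfSize m j : ℝ) * homeTime m k = k.val := by
  rw [cast_halfSize, homeTime, h, Nat.factorial_succ]
  push_cast
  field_simp

lemma halfSize_add_mul_homeTime {j k : Fin m} (h : k.val = j.val + 1) :
    ((halfSize m k + halfSize m j : ℕ) : ℝ) * (homeTime m k / 2) = ((j.val : ℝ) + 2) / 2 := by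
  have h1 := halfSize_mul_homeTime k
  have h2 := halfSize_mul_homeTime_of_succ h
  rw [h] at h2
  push_cast at h2 ⊢
  linear_combination (h1 + h2) / 2

-- Only the values on the allowed machines `g i` and `g i + 1` are ever used.
noncomputable def procTime (g : Fin n → Fin m) (i : Fin n) (x : Fin m) : ℝ :=
  if x = g i then homeTime m x else homeTime m x / 2

lemma procTime_self (g : Fin n → Fin m) (i : Fin n) :
    procTime g i (g i) = ((g i).val ! : ℝ) / (m - 1)! :=
  if_pos rfl

lemma procTime_of_val_eq_succ (g : Fin n → Fin m) {i : Fin n} {x : Fin m}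
    (hx : x.val = (g i).val + 1) :
    procTime g i x = (((g i).val + 1)! : ℝ) / (2 * (m - 1)!) := by
  rw [procTime, if_neg (fun h => by rw [h] at hx; omega), homeTime, hx, div_div, mul_comm]

section Counts

variable (g τ : Fin n → Fin m)

def homeCount (k : Fin m) : ℕ := #{i | g i = k ∧ τ i = k}

def awayCount (k : Fin m) : ℕ := #{i | g i = k ∧ τ i ≠ k}

def guestCount (k : Fin m) : ℕ := #{i | τ i = k ∧ g i ≠ k}

lemma homeCount_add_awayCount (k : Fin m) :
    homeCount g τ k + awayCount g τ k = #{i | g i = k} := by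
  rw [homeCount, awayCount, ← filter_filter, ← filter_filter]
  exact card_filter_add_card_filter_not _

lemma homeCount_add_guestCount (k : Fin m) :
    homeCount g τ k + guestCount g τ k = #{i | τ i = k} := by
  simp_rw [homeCount, guestCount, and_comm (a := g _ = k)]
  rw [← filter_filter, ← filter_filter]
  exact card_filter_add_card_filter_not _

lemma urLoad_procTime (k : Fin m) :
    urLoad (procTime g) τ k =
      ((2 * homeCount g τ k + guestCount g τ k : ℕ) : ℝ) * (homeTime m k / 2) := by
  simp only [urLoad, procTime, eq_comm (a := k), sum_ite, sum_const, nsmul_eq_mul, filter_filter,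
    homeCount, guestCount, and_comm (b := g _ = k)]
  push_cast
  ring

lemma procTime_le_homeTime (i : Fin n) (k : Fin m) : procTime g i k ≤ homeTime m k := by
  unfold procTime; split_ifs <;> linarith [homeTime_pos k]

lemma homeTime_div_two_le_procTime (i : Fin n) (k : Fin m) :
    homeTime m k / 2 ≤ procTime g i k := by
  unfold procTime; split_ifs <;> linarith [homeTime_pos k]

lemma equiCost_procTime_of_eq {i : Fin n} (hi : τ i = g i) :
    equiCost (procTime g) τ i = urLoad (procTime g) τ (τ i) := by
  refine sum_congr rfl fun i' _ => ?_
  rw [procTime, if_pos hi, min_eq_right (procTime_le_homeTime g i' _)]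

lemma equiCost_procTime_of_ne {i : Fin n} (hi : τ i ≠ g i) :
    equiCost (procTime g) τ i =
      ((homeCount g τ (τ i) + guestCount g τ (τ i) : ℕ) : ℝ) * (homeTime m (τ i) / 2) := by
  rw [equiCost, homeCount_add_guestCount, ← nsmul_eq_mul, ← sum_const]
  refine sum_congr rfl fun i' _ => ?_
  rw [procTime, if_neg hi, min_eq_left (homeTime_div_two_le_procTime g i' _)]

end Counts

def IsFeasible (g τ : Fin n → Fin m) : Prop := ∀ i, τ i = g i ∨ (τ i).val = (g i).val + 1

namespace IsFeasible

variable {g σ τ : Fin n → Fin m}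

lemma val_eq_succ (hτ : IsFeasible g τ) {i : Fin n} (hi : τ i ≠ g i) :
    (τ i).val = (g i).val + 1 :=
  (hτ i).resolve_left hi

lemma eq_of_last (hτ : IsFeasible g τ) {i : Fin n} (hi : (g i).val = m - 1) : τ i = g i :=
  (hτ i).resolve_right fun h => by omega

lemma guestCount_eq_zero (hτ : IsFeasible g τ) {k : Fin m} (hk : k.val = 0) :
    guestCount g τ k = 0 := by
  rw [guestCount, card_eq_zero, filter_eq_empty_iff]
  rintro i - ⟨rfl, hi⟩
  have := hτ.val_eq_succ (Ne.symm hi)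
  omega

lemma guestCount_eq_awayCount (hτ : IsFeasible g τ) {j k : Fin m} (hk : k.val = j.val + 1) :
    guestCount g τ k = awayCount g τ j := by
  rw [guestCount, awayCount]
  congr 1
  refine filter_congr fun i _ => ?_
  have := hτ i
  simp only [Fin.ext_iff] at this ⊢
  omega

lemma homeCount_last (hτ : IsFeasible g τ) {k : Fin m} (hk : k.val = m - 1) :
    homeCount g τ k = #{i | g i = k} := by
  rw [homeCount]
  congr 1
  exact filter_congr fun i _ => ⟨And.left, fun hi => ⟨hi, hτ.eq_of_last (hi ▸ hk) ▸ hi⟩⟩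

lemma guestCount_eq_of_forall_le (hτ : IsFeasible g τ) (hσ : IsFeasible g σ) {S : Finset (Fin n)}
    (hS : ∀ i ∉ S, τ i = σ i) {k : Fin m} (hk : ∀ i ∈ S, k.val ≤ (g i).val) :
    guestCount g τ k = guestCount g σ k := by
  rw [guestCount, guestCount]
  congr 1
  refine filter_congr fun i _ => ?_
  by_cases hi : i ∈ S
  · have not_guest : ∀ ρ : Fin n → Fin m, IsFeasible g ρ → ¬ (ρ i = k ∧ g i ≠ k) := by
      rintro ρ hρ ⟨rfl, hgi⟩
      have := hρ.val_eq_succ hgi.symm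
      have := hk i hi
      omega
    exact iff_of_false (not_guest τ hτ) (not_guest σ hσ)
  · rw [hS i hi]

end IsFeasible

section Deviation

variable {g σ τ : Fin n → Fin m} {S : Finset (Fin n)}

lemma exists_mem_of_homeCount_lt (hS : ∀ i ∉ S, τ i = σ i) {k : Fin m}
    (h : homeCount g σ k < homeCount g τ k) : ∃ i ∈ S, g i = k ∧ τ i = k := by
  obtain ⟨i, hτi, hσi⟩ := exists_mem_notMem_of_card_lt_card h
  simp only [mem_filter, mem_univ, true_and] at hτi hσi
  exact ⟨i, not_imp_comm.1 (hS i) fun h => hσi (h ▸ hτi), hτi⟩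

lemma exists_mem_of_awayCount_lt (hS : ∀ i ∉ S, τ i = σ i) {k : Fin m}
    (h : awayCount g σ k < awayCount g τ k) : ∃ i ∈ S, g i = k ∧ τ i ≠ k := by
  obtain ⟨i, hτi, hσi⟩ := exists_mem_notMem_of_card_lt_card h
  simp only [mem_filter, mem_univ, true_and] at hτi hσi
  exact ⟨i, not_imp_comm.1 (hS i) fun h => hσi (h ▸ hτi), hτi⟩

end Deviation

structure IsBalanced (g σ : Fin n → Fin m) : Prop where
  feasible : IsFeasible g σ
  homeCount_eq : ∀ k, homeCount g σ k = halfSize m k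
  awayCount_eq : ∀ k : Fin m, k.val < m - 1 → awayCount g σ k = halfSize m k

namespace IsBalanced

variable {g σ τ : Fin n → Fin m}

lemma homeCount_add_awayCount_eq (hσ : IsBalanced g σ) {k : Fin m} (hk : k.val < m - 1) :
    homeCount g τ k + awayCount g τ k = 2 * halfSize m k := by
  rw [homeCount_add_awayCount, ← homeCount_add_awayCount g σ, hσ.homeCount_eq,
    hσ.awayCount_eq k hk, two_mul]

lemma card_group (hσ : IsBalanced g σ) (k : Fin m) :
    #{i | g i = k} = if k.val = m - 1 then 1 else 2 * halfSize m k := by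
  split_ifs with hk
  · rw [← hσ.feasible.homeCount_last hk, hσ.homeCount_eq, hk, halfSize_last]
  · rw [← homeCount_add_awayCount_eq (τ := σ) hσ (by omega), homeCount_add_awayCount]

lemma urLoad_group_le_two (hσ : IsBalanced g σ) (k : Fin m) :
    urLoad (procTime g) g k ≤ 2 := by
  have hhome : homeCount g g k = #{i | g i = k} := by simp only [homeCount, and_self]
  have hguest : guestCount g g k = 0 := by simp [guestCount]
  rw [urLoad_procTime, hguest, hhome, hσ.card_group]
  have := halfSize_mul_homeTime k
  split_ifs with hk
  · rw [hk, halfSize_last, Nat.cast_one, one_mul] at this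
    push_cast
    linarith
  · push_cast
    linarith

lemma urLoad_eq (hσ : IsBalanced g σ) (k : Fin m) :
    urLoad (procTime g) σ k = ((k.val : ℝ) + 2) / 2 := by
  have hk := halfSize_mul_homeTime k
  rw [urLoad_procTime, hσ.homeCount_eq]
  rcases Nat.eq_zero_or_eq_succ_pred k.val with h0 | hsucc
  · have h0' : (k.val : ℝ) = 0 := by exact_mod_cast h0
    rw [hσ.feasible.guestCount_eq_zero h0]
    push_cast
    linear_combination hk - h0' / 2
  · set j : Fin m := ⟨k.val - 1, by omega⟩
    have hjk : k.val = j.val + 1 := hsucc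
    rw [hσ.feasible.guestCount_eq_awayCount hjk, hσ.awayCount_eq j (by omega)]
    push_cast
    linear_combination hk + halfSize_mul_homeTime_of_succ hjk / 2

lemma equiCost_eq (hσ : IsBalanced g σ) (i : Fin n) :
    equiCost (procTime g) σ i = (((g i).val : ℝ) + 2) / 2 := by
  by_cases hi : σ i = g i
  · rw [equiCost_procTime_of_eq g σ hi, hσ.urLoad_eq, hi]
  · have hsucc := hσ.feasible.val_eq_succ hi
    rw [equiCost_procTime_of_ne g σ hi, hσ.feasible.guestCount_eq_awayCount hsucc,
      hσ.homeCount_eq, hσ.awayCount_eq _ (by omega), halfSize_add_mul_homeTime hsucc]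

lemma homeCount_lt_of_improves (hσ : IsBalanced g σ) {i : Fin n}
    (himp : equiCost (procTime g) τ i < equiCost (procTime g) σ i) (hi : τ i = g i) :
    2 * homeCount g τ (g i) + guestCount g τ (g i) <
      2 * halfSize m (g i) + guestCount g σ (g i) := by
  rw [equiCost_procTime_of_eq g τ hi, hσ.equiCost_eq, ← hσ.urLoad_eq, hi, urLoad_procTime,
    urLoad_procTime, hσ.homeCount_eq] at himp
  exact_mod_cast lt_of_mul_lt_mul_right himp (by linarith [homeTime_pos (g i)])

lemma homeCount_add_awayCount_lt_of_improves (hσ : IsBalanced g σ) (hτ : IsFeasible g τ)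
    {i : Fin n} (himp : equiCost (procTime g) τ i < equiCost (procTime g) σ i) (hi : τ i ≠ g i) :
    homeCount g τ (τ i) + awayCount g τ (g i) < halfSize m (τ i) + halfSize m (g i) := by
  have hsucc := hτ.val_eq_succ hi
  rw [equiCost_procTime_of_ne g τ hi, hτ.guestCount_eq_awayCount hsucc, hσ.equiCost_eq,
    ← halfSize_add_mul_homeTime hsucc] at himp
  exact_mod_cast lt_of_mul_lt_mul_right himp (by linarith [homeTime_pos (τ i)])

section Coalition

variable {S : Finset (Fin n)}

lemma halfSize_le_homeCount (hσ : IsBalanced g σ) (hτ : IsFeasible g τ)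
    (hS : ∀ i ∉ S, τ i = σ i)
    (himp : ∀ i ∈ S, equiCost (procTime g) τ i < equiCost (procTime g) σ i)
    (k : Fin m) : halfSize m k ≤ homeCount g τ k := by
  suffices ∀ d, ∀ k : Fin m, m - 1 - k.val = d → halfSize m k ≤ homeCount g τ k from
    this _ k rfl
  intro d
  induction d with
  | zero =>
    intro k hk
    have hlast : k.val = m - 1 := by omega
    rw [hτ.homeCount_last hlast, ← hσ.feasible.homeCount_last hlast, hσ.homeCount_eq]
  | succ d ih =>
    intro k hk
    by_contra! hlt
    have hgroup := hσ.homeCount_add_awayCount_eq (τ := τ) (k := k) (by omega)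
    obtain ⟨i, hiS, hgi, hτi⟩ := exists_mem_of_awayCount_lt hS (k := k)
      (by rw [hσ.awayCount_eq k (by omega)]; omega)
    have hmove := hσ.homeCount_add_awayCount_lt_of_improves hτ (himp i hiS) (hgi ▸ hτi)
    have hnext := ih (τ i) (by have := hτ.val_eq_succ (hgi ▸ hτi); omega)
    rw [hgi] at hmove
    omega

theorem eq_empty_of_improves (hσ : IsBalanced g σ) (hτ : IsFeasible g τ)
    (hS : ∀ i ∉ S, τ i = σ i)
    (himp : ∀ i ∈ S, equiCost (procTime g) τ i < equiCost (procTime g) σ i) :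
    S = ∅ := by
  by_contra hne
  obtain ⟨i₀, hi₀, hmin⟩ :=
    S.exists_min_image (fun i => (g i).val) (nonempty_iff_ne_empty.2 hne)
  have hle := hσ.halfSize_le_homeCount hτ hS himp
  suffices ∃ i ∈ S, g i = g i₀ ∧ τ i = g i₀ by
    obtain ⟨i, hiS, hgi, hτi⟩ := this
    have hhome := hσ.homeCount_lt_of_improves (himp i hiS) (hτi.trans hgi.symm)
    rw [hgi, hτ.guestCount_eq_of_forall_le hσ.feasible hS hmin] at hhome
    have := hle (g i₀)
    omega
  by_cases hi₀τ : τ i₀ = g i₀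
  · exact ⟨i₀, hi₀, rfl, hi₀τ⟩
  · have hmove := hσ.homeCount_add_awayCount_lt_of_improves hτ (himp i₀ hi₀) hi₀τ
    have hnext := hle (τ i₀)
    have hgroup := hσ.homeCount_add_awayCount_eq (τ := τ) (k := g i₀)
      (by have := hτ.val_eq_succ hi₀τ; omega)
    exact exists_mem_of_homeCount_lt hS (by rw [hσ.homeCount_eq]; omega)

end Coalition

end IsBalanced

-- An `inr` job of group `j` is one of the half of the group placed on machine `j + 1`.
abbrev Job (m : ℕ) :=
  (Σ j : Fin m, Fin (halfSize m j)) ⊕ (Σ j : Fin (m - 1), Fin (halfSize m j))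

def Job.group : Job m → Fin m
  | .inl x => x.1
  | .inr x => x.1.castLE (Nat.sub_le m 1)

def Job.machine : Job m → Fin m
  | .inl x => x.1
  | .inr x => ⟨x.1.val + 1, by omega⟩

lemma card_job_home (k : Fin m) :
    #{x : Job m | x.group = k ∧ x.machine = k} = halfSize m k := by
  rw [card_filter, Fintype.sum_sum_type, Fintype.sum_sigma, Fintype.sum_sigma]
  simp only [Job.group, Fin.ext_iff, Job.machine, and_self, sum_ite_irrel, sum_const, card_univ,
    Fintype.card_fin, smul_eq_mul, mul_one, mul_zero, Fin.val_castLE]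
  rw [Fintype.sum_eq_single k fun x hx => if_neg (Fin.val_ne_of_ne hx), if_pos rfl,
    sum_eq_zero fun x _ => if_neg (by omega), add_zero]

lemma card_job_away (k : Fin m) (hk : k.val < m - 1) :
    #{x : Job m | x.group = k ∧ x.machine ≠ k} = halfSize m k := by
  rw [card_filter, Fintype.sum_sum_type, Fintype.sum_sigma, Fintype.sum_sigma]
  simp only [Job.group, Fin.ext_iff, Job.machine, ne_eq, and_not_self, ↓reduceIte,
    sum_const_zero, Fin.val_castLE, sum_ite_irrel, sum_const, card_univ, Fintype.card_fin,
    smul_eq_mul, mul_one, zero_add]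
  rw [Fintype.sum_eq_single ⟨k.val, hk⟩ fun x hx => if_neg fun h => hx (Fin.ext h.1),
    if_pos ⟨rfl, Nat.succ_ne_self k⟩]

lemma exists_isBalanced (m : ℕ) : ∃ (n : ℕ) (g σ : Fin n → Fin m), IsBalanced g σ := by
  let e := (Fintype.equivFin (Job m)).symm
  have card_comp (P : Job m → Prop) [DecidablePred P] : #{i | P (e i)} = #{x | P x} :=
    card_equiv e (by simp)
  refine ⟨_, fun i => (e i).group, fun i => (e i).machine,
    ⟨fun i => ?_, fun k => ?_, fun k hk => ?_⟩⟩
  · rcases e i with x | x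
    · exact Or.inl rfl
    · exact Or.inr rfl
  · rw [homeCount, card_comp (fun x => x.group = k ∧ x.machine = k), card_job_home]
  · rw [awayCount, card_comp (fun x => x.group = k ∧ x.machine ≠ k), card_job_away k hk]

end EquiSpoa

open EquiSpoa in
/-- The (strong) price of anarchy of EQUI on `m` unrelated machines is
at least `(m+1)/4`. There is an instance with job groups `J_1,…,J_m` (group `J_j`,
`j < m`, has `n_j = 2(m−1)!/(j−1)!` jobs allowed only on machines `j` and `j+1`, with
`p_{j,j} = (j−1)!/(m−1)!` and `p_{j,j+1} = j!/(2(m−1)!)`; `J_m` has one job with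
`p_{m,m} = 1`), whose optimal makespan is at most `2`, while the profile splitting
each group `J_j` (`j < m`) evenly between machines `j` and `j+1` (and `J_m` on machine
`m`) is a strong Nash equilibrium of makespan `(m+1)/2`.
(Machines are indexed by `Fin m`, so machine `j` of the paper is index `j−1`, and the
group of a job `i` is `(grp i).val + 1` in the paper's 1-based numbering.) -/
theorem equi_unrelated_spoa_lower (m : ℕ) (hm : 2 ≤ m) :
    ∃ (nn : ℕ) (grp : Fin nn → Fin m) (p : Fin nn → Fin m → ℝ)
      (allowed : Fin nn → Finset (Fin m)) (σ : Fin nn → Fin m),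
      -- group sizes: `n_j = 2(m−1)!/(j−1)!` for `j < m`, and one job in the last group
      (∀ j : Fin m, (Finset.univ.filter (fun i : Fin nn => grp i = j)).card =
        if j.val = m - 1 then 1
        else 2 * Nat.factorial (m - 1) / Nat.factorial j.val) ∧
      -- a job of group `j` may go only on machines `j` and `j+1`
      (∀ (i : Fin nn) (x : Fin m),
        x ∈ allowed i ↔ x = grp i ∨ x.val = (grp i).val + 1) ∧
      -- processing times
      (∀ i : Fin nn, p i (grp i) =
        (Nat.factorial (grp i).val : ℝ) / Nat.factorial (m - 1)) ∧
      (∀ (i : Fin nn) (x : Fin m), x.val = (grp i).val + 1 →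
        p i x = (Nat.factorial ((grp i).val + 1) : ℝ) / (2 * Nat.factorial (m - 1))) ∧
      -- the profile is feasible and splits every group `j < m` evenly
      (∀ i, σ i ∈ allowed i) ∧
      (∀ j : Fin m, j.val < m - 1 →
        (Finset.univ.filter (fun i : Fin nn => grp i = j ∧ σ i = j)).card =
          Nat.factorial (m - 1) / Nat.factorial j.val ∧
        (Finset.univ.filter (fun i : Fin nn => grp i = j ∧ σ i ≠ j)).card =
          Nat.factorial (m - 1) / Nat.factorial j.val) ∧
      -- strong Nash equilibrium (moves restricted to allowed machines)
      (¬ ∃ (S : Finset (Fin nn)) (σ' : Fin nn → Fin m), S.Nonempty ∧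
          (∀ i, σ' i ∈ allowed i) ∧ (∀ i ∉ S, σ' i = σ i) ∧
          ∀ i ∈ S, equiCost p σ' i < equiCost p σ i) ∧
      -- its makespan is `(m+1)/2`
      (∀ x, urLoad p σ x ≤ ((m : ℝ) + 1) / 2) ∧
      (∃ x, urLoad p σ x = ((m : ℝ) + 1) / 2) ∧
      -- and the optimal makespan is at most `2`
      (∃ τ : Fin nn → Fin m, (∀ i, τ i ∈ allowed i) ∧ ∀ x, urLoad p τ x ≤ 2) := by
  obtain ⟨n, g, σ, hσ⟩ := exists_isBalanced m
  let allowed (i : Fin n) : Finset (Fin m) := {x | x = g i ∨ x.val = (g i).val + 1}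
  have mem_allowed (i : Fin n) (x : Fin m) :
      x ∈ allowed i ↔ x = g i ∨ x.val = (g i).val + 1 := by
    simp [allowed]
  have feasible_iff (τ : Fin n → Fin m) : (∀ i, τ i ∈ allowed i) ↔ IsFeasible g τ := by
    simp only [mem_allowed, IsFeasible]
  refine ⟨n, g, procTime g, allowed, σ, fun k => ?_, mem_allowed, procTime_self g,
    fun _ _ => procTime_of_val_eq_succ g, (feasible_iff σ).2 hσ.feasible,
    fun k hk => ⟨hσ.homeCount_eq k, hσ.awayCount_eq k hk⟩, ?_, fun x => ?_,
    ⟨⟨m - 1, by omega⟩, ?_⟩, ⟨g, (feasible_iff g).2 fun i => Or.inl rfl, hσ.urLoad_group_le_two⟩⟩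
  · rw [hσ.card_group, halfSize, Nat.mul_div_assoc _ (Nat.factorial_dvd_factorial (by omega))]
  · rintro ⟨S, τ, hne, hτ, hS, himp⟩
    exact hne.ne_empty (hσ.eq_empty_of_improves ((feasible_iff τ).1 hτ) hS himp)
  · rw [hσ.urLoad_eq]
    have : (x.val : ℝ) + 1 ≤ m := by exact_mod_cast x.isLt
    linarith
  · rw [hσ.urLoad_eq, Nat.cast_sub (by omega)]
    push_cast
    ring
end
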